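/- arXiv:1601.00361 — 7 statements merged into one kernel-verified Lean document; each statement's English description precedes it below -/
import Mathlib

section
/- Assume moreover that 𝒜 is bounded, set K₀ := sup_{s ≥ 0} 𝒜(s), and let a > 0. For t > 0 one has K₀/cosh(a t) ∈ [0, K₀), so the integrand below is defined, and for every d > 0 the Lebesgue integral I(d) = ∫_d^∞ 𝒜⁻¹(K₀/cosh(a t)) dt is finite; moreover I is strictly decreasing on (0,∞) and I(d) → 0 as d → +∞. -/
/-! The integrand `f t = 𝒜⁻¹(K₀ / cosh (a t))` is positive and nonincreasing on `(0, ∞)`.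
Once `K₀ / cosh (a t) ≤ 𝒜(δ₀)`, the growth bound `𝒜(s) ≥ D s^q` inverts to
`f t ≤ (K₀ / (D cosh (a t)))^(1/q) ≤ C e^{-(a/q) t}`, so `f` is integrable on every ray
`(d, ∞)` with `d > 0`; the tail integral then decreases strictly because `f > 0`, and tends
to `0`. -/

open MeasureTheory Set Filter Topology Real

theorem Real.exp_div_two_le_cosh (x : ℝ) : exp x / 2 ≤ cosh x := by
  rw [cosh_eq]
  linarith [exp_pos (-x)]

theorem Real.tendsto_cosh_atTop : Tendsto cosh atTop atTop :=
  tendsto_atTop_mono exp_div_two_le_cosh (tendsto_exp_atTop.atTop_div_const two_pos)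

theorem tendsto_div_cosh_mul_atTop_zero (K : ℝ) {a : ℝ} (ha : 0 < a) :
    Tendsto (fun t => K / cosh (a * t)) atTop (𝓝 0) :=
  tendsto_const_nhds.div_atTop (tendsto_cosh_atTop.comp (tendsto_id.const_mul_atTop ha))

theorem div_cosh_le_two_mul_exp_neg {K : ℝ} (hK : 0 ≤ K) (x : ℝ) :
    K / cosh x ≤ 2 * K * exp (-x) := by
  calc K / cosh x ≤ K / (exp x / 2) :=
        div_le_div_of_nonneg_left hK (by positivity) (exp_div_two_le_cosh x)
    _ = 2 * K * exp (-x) := by rw [exp_neg]; field_simp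

theorem div_cosh_mem_Ico {K x : ℝ} (hK : 0 < K) (hx : x ≠ 0) : K / cosh x ∈ Ico 0 K :=
  ⟨by positivity, div_lt_self hK (one_lt_cosh.2 hx)⟩

theorem antitoneOn_div_cosh_mul {K a : ℝ} (hK : 0 ≤ K) (ha : 0 ≤ a) :
    AntitoneOn (fun t => K / cosh (a * t)) (Ici 0) := fun _ hs _ ht hst =>
  div_le_div_of_nonneg_left hK (cosh_pos _) <|
    cosh_strictMonoOn.monotoneOn (mul_nonneg ha hs) (mul_nonneg ha ht)
      (mul_le_mul_of_nonneg_left hst ha)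

theorem integrableOn_Ioi_div_cosh_mul_rpow {K a p : ℝ} (hK : 0 ≤ K) (ha : 0 < a)
    (hp : 0 < p) (T : ℝ) : IntegrableOn (fun t => (K / cosh (a * t)) ^ p) (Ioi T) := by
  refine ((exp_neg_integrableOn_Ioi T (mul_pos ha hp)).const_mul ((2 * K) ^ p)).mono'
    (by fun_prop : Measurable _).aestronglyMeasurable
    (Eventually.of_forall fun t => ?_)
  rw [norm_of_nonneg (by positivity)]
  calc (K / cosh (a * t)) ^ p ≤ (2 * K * exp (-(a * t))) ^ p :=
        rpow_le_rpow (by positivity) (div_cosh_le_two_mul_exp_neg hK _) hp.le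
    _ = (2 * K) ^ p * exp (-(a * p) * t) := by
        rw [mul_rpow (by positivity) (exp_pos _).le, ← exp_mul]
        ring_nf

theorem AntitoneOn.integrableOn_Ioi {f g : ℝ → ℝ} {c d : ℝ} (hf : AntitoneOn f (Ioi c))
    (hcd : c < d) (hg : ∀ T, IntegrableOn g (Ioi T)) (hfg : ∀ᶠ t in atTop, ‖f t‖ ≤ g t) :
    IntegrableOn f (Ioi d) := by
  obtain ⟨T, hT⟩ := (hfg.and (eventually_ge_atTop d)).exists_forall_of_atTop
  have hdT : d ≤ T := (hT T le_rfl).2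
  rw [← Ioc_union_Ioi_eq_Ioi hdT]
  refine IntegrableOn.union ?_ ?_
  · exact ((hf.mono fun t ht => hcd.trans_le ht.1).integrableOn_isCompact
      isCompact_Icc).mono_set Ioc_subset_Icc_self
  · refine (hg T).mono' (aemeasurable_restrict_of_antitoneOn measurableSet_Ioi
      (hf.mono (Ioi_subset_Ioi (hcd.trans_le hdT).le))).aestronglyMeasurable ?_
    exact (ae_restrict_iff' measurableSet_Ioi).2
      (Eventually.of_forall fun t ht => (hT t (le_of_lt ht)).1)

theorem strictAntiOn_integral_Ioi {f : ℝ → ℝ} {c : ℝ}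
    (hf : ∀ d, c < d → IntegrableOn f (Ioi d)) (hpos : ∀ t, c < t → 0 < f t) :
    StrictAntiOn (fun d => ∫ t in Ioi d, f t) (Ioi c) := by
  intro d₁ hd₁ d₂ _ h
  have hsplit := intervalIntegral.integral_Ioi_sub_Ioi (hf d₁ hd₁) h.le
  have hmid : 0 < ∫ t in d₁..d₂, f t :=
    intervalIntegral.intervalIntegral_pos_of_pos_on
      ((intervalIntegrable_iff_integrableOn_Ioc_of_le h.le).2
        ((hf d₁ hd₁).mono_set Ioc_subset_Ioi_self))
      (fun t ht => hpos t (lt_trans hd₁ ht.1)) h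
  show ∫ t in Ioi d₂, f t < ∫ t in Ioi d₁, f t
  linarith

theorem StrictMonoOn.monotoneOn_of_rightInvOn {α β : Type*} [LinearOrder α] [Preorder β]
    {f : α → β} {g : β → α} {s : Set α} {t : Set β} (hf : StrictMonoOn f s)
    (hg : MapsTo g t s) (hfg : RightInvOn g f t) : MonotoneOn g t :=
  fun _ hx _ hy hxy => (hf.le_iff_le (hg hx) (hg hy)).1 (by rwa [hfg hx, hfg hy])

theorem le_rpow_inv_of_mul_rpow_le {D q s x : ℝ} (hD : 0 < D) (hq : 0 < q) (hs : 0 ≤ s)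
    (h : D * s ^ q ≤ x) : s ≤ (x / D) ^ q⁻¹ := by
  have hsq : s ^ q ≤ x / D := by rwa [le_div_iff₀ hD, mul_comm]
  exact (le_rpow_inv_iff_of_pos hs ((rpow_nonneg hs q).trans hsq) hq).2 hsq

theorem StrictMonoOn.le_rpow_inv_of_apply_le {A : ℝ → ℝ} {D q δ₀ s : ℝ}
    (hA : StrictMonoOn A (Ici 0)) (hD : 0 < D) (hq : 0 < q)
    (hgrowth : ∀ s ∈ Icc (0:ℝ) δ₀, D * s ^ q ≤ A s) (hδ₀ : 0 ≤ δ₀) (hs : 0 ≤ s)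
    (hsδ₀ : A s ≤ A δ₀) : s ≤ (A s / D) ^ q⁻¹ :=
  le_rpow_inv_of_mul_rpow_le hD hq hs (hgrowth s ⟨hs, (hA.le_iff_le hs hδ₀).1 hsδ₀⟩)

theorem stmt_1_general (A Ainv : ℝ → ℝ)
    (hA : ContDiffOn ℝ 1 A (Set.Ici 0))
    (hA0 : A 0 = 0)
    (hA' : ∀ s : ℝ, 0 < s → 0 < deriv A s)
    (q δ₀ D : ℝ) (hq : 0 < q) (hδ₀ : 0 < δ₀) (hD : 0 < D)
    (hgrowth : ∀ s ∈ Set.Icc (0:ℝ) δ₀, D * s ^ q ≤ A s)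
    (hbdd : BddAbove (A '' Set.Ici 0))
    (K₀ : ℝ) (hK₀ : K₀ = sSup (A '' Set.Ici 0))
    (hAinvR : ∀ t : ℝ, 0 ≤ t → t < K₀ → 0 ≤ Ainv t ∧ A (Ainv t) = t)
    (a : ℝ) (ha : 0 < a) :
    (∀ t : ℝ, 0 < t → K₀ / Real.cosh (a * t) ∈ Set.Ico 0 K₀) ∧
    (∀ d : ℝ, 0 < d →
      MeasureTheory.IntegrableOn (fun t => Ainv (K₀ / Real.cosh (a * t))) (Set.Ioi d)) ∧
    StrictAntiOn (fun d => ∫ t in Set.Ioi d, Ainv (K₀ / Real.cosh (a * t))) (Set.Ioi 0) ∧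
    Filter.Tendsto (fun d => ∫ t in Set.Ioi d, Ainv (K₀ / Real.cosh (a * t)))
      Filter.atTop (nhds 0) := by
  have hAmono : StrictMonoOn A (Ici 0) :=
    strictMonoOn_of_deriv_pos (convex_Ici 0) hA.continuousOn
      fun s hs => hA' s (by rwa [interior_Ici] at hs)
  have hAδ₀ : 0 < A δ₀ := (by positivity : 0 < D * δ₀ ^ q).trans_le (hgrowth δ₀ ⟨hδ₀.le, le_rfl⟩)
  have hK₀pos : 0 < K₀ :=
    hAδ₀.trans_le (hK₀ ▸ le_csSup hbdd (mem_image_of_mem A (mem_Ici.2 hδ₀.le)))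
  have hmem : ∀ t : ℝ, 0 < t → K₀ / cosh (a * t) ∈ Ico 0 K₀ :=
    fun t ht => div_cosh_mem_Ico hK₀pos (by positivity)
  have hinv : ∀ t : ℝ, 0 < t →
      0 ≤ Ainv (K₀ / cosh (a * t)) ∧ A (Ainv (K₀ / cosh (a * t))) = K₀ / cosh (a * t) :=
    fun t ht => hAinvR _ (hmem t ht).1 (hmem t ht).2
  have hanti : AntitoneOn (fun t => Ainv (K₀ / cosh (a * t))) (Ioi 0) :=
    (hAmono.monotoneOn_of_rightInvOn (fun x hx => (hAinvR x hx.1 hx.2).1)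
      (fun x hx => (hAinvR x hx.1 hx.2).2)).comp_AntitoneOn
      ((antitoneOn_div_cosh_mul hK₀pos.le ha.le).mono Ioi_subset_Ici_self) hmem
  have hpos : ∀ t : ℝ, 0 < t → 0 < Ainv (K₀ / cosh (a * t)) := fun t ht =>
    (hAmono.lt_iff_lt (mem_Ici.2 le_rfl) (hinv t ht).1).1
      (by rw [hA0, (hinv t ht).2]; positivity)
  have hdecay : ∀ᶠ t in atTop,
      ‖Ainv (K₀ / cosh (a * t))‖ ≤ (K₀ / D / cosh (a * t)) ^ q⁻¹ := by
    filter_upwards [eventually_gt_atTop 0,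
      (tendsto_div_cosh_mul_atTop_zero K₀ ha).eventually (eventually_le_nhds hAδ₀)]
      with t ht hsmall
    obtain ⟨hs, hAs⟩ := hinv t ht
    rw [norm_of_nonneg hs, div_right_comm]
    simpa only [hAs] using
      hAmono.le_rpow_inv_of_apply_le hD hq hgrowth hδ₀.le hs (hAs.trans_le hsmall)
  have hint : ∀ d : ℝ, 0 < d → IntegrableOn (fun t => Ainv (K₀ / cosh (a * t))) (Ioi d) :=
    fun d hd => hanti.integrableOn_Ioi hd
      (integrableOn_Ioi_div_cosh_mul_rpow (by positivity) ha (inv_pos.2 hq)) hdecay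
  exact ⟨hmem, hint, strictAntiOn_integral_Ioi hint hpos, tendsto_integral_Ioi_zero tendsto_id⟩

/-- Assume 𝒜 is bounded, `K₀ := sup_{s ≥ 0} 𝒜(s)`, and `a > 0`. For `t > 0`,
`K₀/cosh(a t) ∈ [0, K₀)`, so the integrand is defined; for every `d > 0` the Lebesgue
integral `I(d) = ∫_d^∞ 𝒜⁻¹(K₀/cosh(a t)) dt` is finite; moreover `I` is strictly
decreasing on `(0,∞)` and `I(d) → 0` as `d → +∞`. -/
theorem stmt_1 (A Ainv : ℝ → ℝ)
    (hA : ContDiffOn ℝ 1 A (Set.Ici 0))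
    (hA0 : A 0 = 0)
    (hA' : ∀ s : ℝ, 0 < s → 0 < deriv A s)
    (q δ₀ D : ℝ) (hq : 0 < q) (hδ₀ : 0 < δ₀) (hD : 0 < D)
    (hgrowth : ∀ s ∈ Set.Icc (0:ℝ) δ₀, D * s ^ q ≤ A s)
    (hbdd : BddAbove (A '' Set.Ici 0))
    (K₀ : ℝ) (hK₀ : K₀ = sSup (A '' Set.Ici 0))
    (hAinvL : ∀ s : ℝ, 0 ≤ s → Ainv (A s) = s)
    (hAinvR : ∀ t : ℝ, 0 ≤ t → t < K₀ → 0 ≤ Ainv t ∧ A (Ainv t) = t)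
    (a : ℝ) (ha : 0 < a) :
    (∀ t : ℝ, 0 < t → K₀ / Real.cosh (a * t) ∈ Set.Ico 0 K₀) ∧
    (∀ d : ℝ, 0 < d →
      MeasureTheory.IntegrableOn (fun t => Ainv (K₀ / Real.cosh (a * t))) (Set.Ioi d)) ∧
    StrictAntiOn (fun d => ∫ t in Set.Ioi d, Ainv (K₀ / Real.cosh (a * t))) (Set.Ioi 0) ∧
    Filter.Tendsto (fun d => ∫ t in Set.Ioi d, Ainv (K₀ / Real.cosh (a * t)))
      Filter.atTop (nhds 0) :=
  stmt_1_general A Ainv hA hA0 hA' q δ₀ D hq hδ₀ hD hgrowth hbdd K₀ hK₀ hAinvR a ha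
end

section
/- Assume moreover that 𝒜 is bounded, set K₀ := sup_{s ≥ 0} 𝒜(s), and let a > 0. Then ∫_0^∞ 𝒜⁻¹(K₀/cosh(a r)) dr = +∞ (as a Lebesgue integral of a nonnegative function) if and only if ∫_0^{K₀} 𝒜⁻¹(t)/√(K₀ − t) dt = +∞. -/
/-! The substitution `t = K₀ / cosh (a r)` turns the first integral into
`∫₀^K₀ 𝒜⁻¹(t) · K₀ / (a t √(K₀² - t²)) dt`, whose weight is `1 / √(K₀ - t)` times
`K₀ / (a t √(K₀ + t))`. That factor is bounded below on `(0, K₀)` and bounded above away from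
`t = 0`, while near `0` the growth condition gives `𝒜⁻¹(t) ≤ (t / D)^(1/q)`, so the transformed
integrand is `O(t^(1/q - 1))` there and integrable. Hence the two integrals diverge together. -/

open MeasureTheory Set Real
open scoped ENNReal

section DivCosh

variable {K a : ℝ}

theorem hasDerivAt_div_cosh_mul (r : ℝ) :
    HasDerivAt (fun r => K / cosh (a * r)) (-(K * (a * sinh (a * r))) / cosh (a * r) ^ 2) r := by
  have hcosh : HasDerivAt (fun r => cosh (a * r)) (sinh (a * r) * a) r :=
    (hasDerivAt_cosh (a * r)).comp r ((hasDerivAt_id r).const_mul a |>.congr_deriv (mul_one a))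
  exact ((hasDerivAt_const r K).fun_div hcosh (cosh_pos (a * r)).ne').congr_deriv (by ring)

theorem strictAntiOn_div_cosh_mul (hK : 0 < K) (ha : 0 < a) :
    StrictAntiOn (fun r => K / cosh (a * r)) (Ici 0) := fun _ hr _ hs hrs =>
  div_lt_div_of_pos_left hK (cosh_pos _) <|
    cosh_strictMonoOn (mul_nonneg ha.le hr) (mul_nonneg ha.le hs) (mul_lt_mul_of_pos_left hrs ha)

theorem image_div_cosh_mul_Ioi (hK : 0 < K) (ha : 0 < a) :
    (fun r => K / cosh (a * r)) '' Ioi 0 = Ioo 0 K := by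
  ext t
  constructor
  · rintro ⟨r, hr, rfl⟩
    have h1 : 1 < cosh (a * r) := one_lt_cosh.2 (mul_pos ha hr).ne'
    exact ⟨by positivity, div_lt_self hK h1⟩
  · rintro ⟨ht, htK⟩
    have h1 : 1 < K / t := (one_lt_div ht).2 htK
    refine ⟨arcosh (K / t) / a, div_pos (arcosh_pos h1) ha, ?_⟩
    simp only [mul_div_cancel₀ _ ha.ne', cosh_arcosh h1.le, div_div_cancel₀ hK.ne']

theorem lintegral_comp_div_cosh_mul (hK : 0 < K) (ha : 0 < a) (f : ℝ → ℝ≥0∞) :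
    ∫⁻ r in Ioi 0, f (K / cosh (a * r)) =
      ∫⁻ t in Ioo 0 K, ENNReal.ofReal (K / (a * t * √(K ^ 2 - t ^ 2))) * f t := by
  rw [← image_div_cosh_mul_Ioi hK ha, lintegral_image_eq_lintegral_abs_deriv_mul measurableSet_Ioi
    (fun r _ => (hasDerivAt_div_cosh_mul r).hasDerivWithinAt)
    ((strictAntiOn_div_cosh_mul hK ha).injOn.mono Ioi_subset_Ici_self)]
  refine setLIntegral_congr_fun measurableSet_Ioi fun r hr => ?_
  have hsinh : 0 < sinh (a * r) := sinh_pos_iff.2 (mul_pos ha hr)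
  have hcosh : 0 < cosh (a * r) := cosh_pos _
  have hsqrt : √(K ^ 2 - (K / cosh (a * r)) ^ 2) = K * sinh (a * r) / cosh (a * r) := by
    rw [← sqrt_sq (by positivity : 0 ≤ K * sinh (a * r) / cosh (a * r))]
    congr 1
    field_simp
    linear_combination cosh_sq (a * r)
  have hjacobian : K * (a * sinh (a * r)) / cosh (a * r) ^ 2 *
      (K / (a * (K / cosh (a * r)) * (K * sinh (a * r) / cosh (a * r)))) = 1 := by
    field_simp
  rw [← mul_assoc, ← ENNReal.ofReal_mul (abs_nonneg _), hsqrt, abs_div, abs_neg,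
    abs_of_pos (by positivity), abs_of_pos (by positivity), hjacobian, ENNReal.ofReal_one, one_mul]

end DivCosh

theorem sqrt_sq_sub_sq {K t : ℝ} (ht : t ≤ K) : √(K ^ 2 - t ^ 2) = √(K - t) * √(K + t) := by
  rw [← sqrt_mul (sub_nonneg.2 ht)]
  ring_nf

theorem ofReal_div_mul_sqrt_sq_sub_sq_mul {K a t : ℝ} (y : ℝ) (hK : 0 ≤ K) (ha : 0 ≤ a)
    (ht : 0 ≤ t) (htK : t ≤ K) :
    ENNReal.ofReal (K / (a * t * √(K ^ 2 - t ^ 2))) * ENNReal.ofReal y =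
      ENNReal.ofReal (K / (a * t * √(K + t))) * ENNReal.ofReal (y / √(K - t)) := by
  rw [← ENNReal.ofReal_mul (by positivity), ← ENNReal.ofReal_mul (by positivity),
    sqrt_sq_sub_sq htK]
  congr 1
  simp only [div_eq_mul_inv, mul_inv]
  ring

theorem antitoneOn_div_mul_sqrt_add {K a : ℝ} (hK : 0 ≤ K) (ha : 0 < a) :
    AntitoneOn (fun t => K / (a * t * √(K + t))) (Ioi 0) := by
  rintro s (hs : 0 < s) t (ht : 0 < t) hst
  exact div_le_div_of_nonneg_left hK (by positivity) (by gcongr)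

theorem le_rpow_inv_of_growth {A : ℝ → ℝ} {q δ₀ D s : ℝ} (hmono : StrictMonoOn A (Ici 0))
    (hq : 0 < q) (hD : 0 < D) (hδ₀ : 0 ≤ δ₀) (hgrowth : ∀ s ∈ Icc 0 δ₀, D * s ^ q ≤ A s)
    (hs : 0 ≤ s) (hsδ : A s ≤ A δ₀) : s ≤ (A s / D) ^ q⁻¹ := by
  have hpow : s ^ q ≤ A s / D :=
    (le_div_iff₀' hD).2 (hgrowth s ⟨hs, (hmono.le_iff_le hs hδ₀).1 hsδ⟩)
  calc s = (s ^ q) ^ q⁻¹ := (rpow_rpow_inv hs hq.ne').symm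
    _ ≤ (A s / D) ^ q⁻¹ := by gcongr

theorem setLIntegral_Ioc_lt_top_of_le_rpow {f : ℝ → ℝ≥0∞} {c C p : ℝ} (hc : 0 ≤ c) (hp : -1 < p)
    (hf : ∀ t ∈ Ioc 0 c, f t ≤ ENNReal.ofReal (C * t ^ p)) : ∫⁻ t in Ioc 0 c, f t < ⊤ := by
  have hint : IntegrableOn (fun t => C * t ^ p) (Ioc 0 c) := by
    have := (intervalIntegral.intervalIntegrable_rpow' (a := 0) (b := c) hp).const_mul C
    rwa [intervalIntegrable_iff_integrableOn_Ioc_of_le hc] at this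
  exact (setLIntegral_mono' measurableSet_Ioc hf).trans_lt hint.lintegral_lt_top

theorem setLIntegral_mul_eq_top_iff {α : Type*} [MeasurableSpace α] {μ : Measure α}
    {s t u : Set α} (hs : MeasurableSet s) (ht : MeasurableSet t) (hts : t ⊆ s) (hsut : s ⊆ u ∪ t)
    {w f : α → ℝ≥0∞} {m M : ℝ≥0∞} (hm : m ≠ 0) (hM : M ≠ ⊤) (hlow : ∀ x ∈ s, m ≤ w x)
    (hup : ∀ x ∈ t, w x ≤ M) (hu : ∫⁻ x in u, w x * f x ∂μ ≠ ⊤) :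
    ∫⁻ x in s, w x * f x ∂μ = ⊤ ↔ ∫⁻ x in s, f x ∂μ = ⊤ := by
  constructor
  · intro h
    by_contra hf
    have htail : ∫⁻ x in t, w x * f x ∂μ ≤ M * ∫⁻ x in s, f x ∂μ :=
      calc ∫⁻ x in t, w x * f x ∂μ ≤ ∫⁻ x in t, M * f x ∂μ :=
            setLIntegral_mono' ht fun x hx => mul_le_mul_left (hup x hx) _
        _ = M * ∫⁻ x in t, f x ∂μ := lintegral_const_mul' M f hM
        _ ≤ M * ∫⁻ x in s, f x ∂μ := by gcongr
    have : ∫⁻ x in s, w x * f x ∂μ < ⊤ :=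
      calc ∫⁻ x in s, w x * f x ∂μ ≤ ∫⁻ x in u ∪ t, w x * f x ∂μ := lintegral_mono_set hsut
        _ ≤ ∫⁻ x in u, w x * f x ∂μ + ∫⁻ x in t, w x * f x ∂μ := lintegral_union_le _ _ _
        _ < ⊤ := ENNReal.add_lt_top.2 ⟨hu.lt_top, htail.trans_lt (ENNReal.mul_lt_top hM.lt_top
            (Ne.lt_top hf))⟩
    exact this.ne h
  · intro h
    refine top_le_iff.1 ?_
    calc ⊤ = m * ∫⁻ x in s, f x ∂μ := by rw [h, ENNReal.mul_top hm]
      _ ≤ ∫⁻ x in s, m * f x ∂μ := lintegral_const_mul_le m f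
      _ ≤ ∫⁻ x in s, w x * f x ∂μ := setLIntegral_mono' hs fun x hx => mul_le_mul_left (hlow x hx) _

theorem setLIntegral_Ioc_div_mul_sqrt_mul_lt_top {K a c D q : ℝ} {y : ℝ → ℝ} (ha : 0 < a)
    (hc : 0 ≤ c) (hcK : c < K) (hD : 0 < D) (hq : 0 < q)
    (hy : ∀ t ∈ Ioc 0 c, 0 ≤ y t ∧ y t ≤ (t / D) ^ q⁻¹) :
    ∫⁻ t in Ioc 0 c, ENNReal.ofReal (K / (a * t * √(K + t))) * ENNReal.ofReal (y t / √(K - t))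
      < ⊤ := by
  have hK : 0 < K := hc.trans_lt hcK
  have hKc : 0 < K - c := sub_pos.2 hcK
  refine setLIntegral_Ioc_lt_top_of_le_rpow hc (p := q⁻¹ - 1)
    (C := K / (a * √K * √(K - c) * D ^ q⁻¹)) (by linarith [inv_pos.2 hq]) ?_
  rintro t ⟨ht, htc⟩
  obtain ⟨hy0, hyt⟩ := hy t ⟨ht, htc⟩
  rw [← ENNReal.ofReal_mul (by positivity)]
  refine ENNReal.ofReal_le_ofReal ?_
  calc K / (a * t * √(K + t)) * (y t / √(K - t))
      ≤ K / (a * t * √K) * ((t / D) ^ q⁻¹ / √(K - c)) := by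
        gcongr
        · linarith
    _ = K / (a * √K * √(K - c) * D ^ q⁻¹) * t ^ (q⁻¹ - 1) := by
        rw [div_rpow ht.le hD.le, rpow_sub_one ht.ne']
        field_simp

theorem stmt_3_general (A Ainv : ℝ → ℝ)
    (hA : ContDiffOn ℝ 1 A (Set.Ici 0))
    (hA' : ∀ s : ℝ, 0 < s → 0 < deriv A s)
    (q δ₀ D : ℝ) (hq : 0 < q) (hδ₀ : 0 < δ₀) (hD : 0 < D)
    (hgrowth : ∀ s ∈ Set.Icc (0:ℝ) δ₀, D * s ^ q ≤ A s)
    (hbdd : BddAbove (A '' Set.Ici 0))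
    (K₀ : ℝ) (hK₀ : K₀ = sSup (A '' Set.Ici 0))
    (hAinvR : ∀ t : ℝ, 0 ≤ t → t < K₀ → 0 ≤ Ainv t ∧ A (Ainv t) = t)
    (a : ℝ) (ha : 0 < a) :
    (∫⁻ r in Set.Ioi (0:ℝ), ENNReal.ofReal (Ainv (K₀ / Real.cosh (a * r))) = ⊤) ↔
    (∫⁻ t in Set.Ioo (0:ℝ) K₀, ENNReal.ofReal (Ainv t / Real.sqrt (K₀ - t)) = ⊤) := by
  have hmono : StrictMonoOn A (Ici 0) :=
    strictMonoOn_of_deriv_pos (convex_Ici 0) hA.continuousOn (by simpa using hA')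
  have hAδ₀ : 0 < A δ₀ := (by positivity : 0 < D * δ₀ ^ q).trans_le (hgrowth δ₀ ⟨hδ₀.le, le_rfl⟩)
  have hAδ₀K : A δ₀ < K₀ :=
    (hmono hδ₀.le (by linarith : 0 ≤ δ₀ + 1) (lt_add_one δ₀)).trans_le
      (hK₀ ▸ le_csSup hbdd (mem_image_of_mem A (by linarith : 0 ≤ δ₀ + 1)))
  have hK₀pos : 0 < K₀ := hAδ₀.trans hAδ₀K
  have hAinv : ∀ t ∈ Ioc 0 (A δ₀), 0 ≤ Ainv t ∧ Ainv t ≤ (t / D) ^ q⁻¹ := by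
    rintro t ⟨ht, htc⟩
    obtain ⟨h0, hAt⟩ := hAinvR t ht.le (htc.trans_lt hAδ₀K)
    have hle := le_rpow_inv_of_growth hmono hq hD hδ₀.le hgrowth h0 (hAt.symm ▸ htc)
    rw [hAt] at hle
    exact ⟨h0, hle⟩
  rw [lintegral_comp_div_cosh_mul hK₀pos ha fun t => ENNReal.ofReal (Ainv t),
    setLIntegral_congr_fun measurableSet_Ioo fun t ht =>
      ofReal_div_mul_sqrt_sq_sub_sq_mul _ hK₀pos.le ha.le ht.1.le ht.2.le]
  have hw := antitoneOn_div_mul_sqrt_add hK₀pos.le ha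
  refine setLIntegral_mul_eq_top_iff measurableSet_Ioo measurableSet_Ioo
    (Ioo_subset_Ioo_left hAδ₀.le) (Ioc_union_Ioo_eq_Ioo hAδ₀.le hAδ₀K).ge
    (m := ENNReal.ofReal (K₀ / (a * K₀ * √(K₀ + K₀)))) (by positivity) ENNReal.ofReal_ne_top
    (fun t ht => ENNReal.ofReal_le_ofReal (hw ht.1 hK₀pos ht.2.le))
    (fun t ht => ENNReal.ofReal_le_ofReal (hw hAδ₀ (hAδ₀.trans ht.1) ht.1.le))
    (setLIntegral_Ioc_div_mul_sqrt_mul_lt_top ha hAδ₀.le hAδ₀K hD hq hAinv).ne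

/-- Assume 𝒜 is bounded, `K₀ := sup_{s ≥ 0} 𝒜(s)`, and `a > 0`. Then
`∫_0^∞ 𝒜⁻¹(K₀/cosh(a r)) dr = +∞` (as a Lebesgue integral of a nonnegative function)
if and only if `∫_0^{K₀} 𝒜⁻¹(t)/√(K₀ − t) dt = +∞`. -/
theorem stmt_3 (A Ainv : ℝ → ℝ)
    (hA : ContDiffOn ℝ 1 A (Set.Ici 0))
    (hA0 : A 0 = 0)
    (hA' : ∀ s : ℝ, 0 < s → 0 < deriv A s)
    (q δ₀ D : ℝ) (hq : 0 < q) (hδ₀ : 0 < δ₀) (hD : 0 < D)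
    (hgrowth : ∀ s ∈ Set.Icc (0:ℝ) δ₀, D * s ^ q ≤ A s)
    (hbdd : BddAbove (A '' Set.Ici 0))
    (K₀ : ℝ) (hK₀ : K₀ = sSup (A '' Set.Ici 0))
    (hAinvL : ∀ s : ℝ, 0 ≤ s → Ainv (A s) = s)
    (hAinvR : ∀ t : ℝ, 0 ≤ t → t < K₀ → 0 ≤ Ainv t ∧ A (Ainv t) = t)
    (a : ℝ) (ha : 0 < a) :
    (∫⁻ r in Set.Ioi (0:ℝ), ENNReal.ofReal (Ainv (K₀ / Real.cosh (a * r))) = ⊤) ↔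
    (∫⁻ t in Set.Ioo (0:ℝ) K₀, ENNReal.ofReal (Ainv t / Real.sqrt (K₀ - t)) = ⊤) :=
  stmt_3_general A Ainv hA hA' q δ₀ D hq hδ₀ hD hgrowth hbdd K₀ hK₀ hAinvR a ha
end

section
/- Let 𝒜 : [0,∞) → ℝ be continuous and strictly increasing with 𝒜(0) = 0, and let K₀ > 0 be such that every t ∈ [0, K₀) lies in the range of 𝒜. If ∫_0^{K₀} 𝒜⁻¹(t)/√(K₀ − t) dt = +∞, then 𝒜 is bounded and sup_{s ≥ 0} 𝒜(s) = K₀. -/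
/-!
If `𝒜 s ≥ K₀` for some `s ≥ 0`, then by monotonicity `𝒜⁻¹ ≤ s` on `(0, K₀)`, so the integral is
dominated by `s ∫_0^{K₀} (K₀ - t)^{-1/2} dt < ∞`. Hence `𝒜 < K₀` on `[0, ∞)`, while its image
contains `[0, K₀)`, so `K₀` is the least upper bound of the image.
-/

open MeasureTheory Set

lemma integrableOn_Ioo_sub_rpow_neg_half {a b : ℝ} (hab : a ≤ b) :
    IntegrableOn (fun t : ℝ => (b - t) ^ (-(1 / 2) : ℝ)) (Ioo a b) := by
  have h : IntervalIntegrable (fun x : ℝ => x ^ (-(1 / 2) : ℝ)) volume 0 (b - a) :=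
    intervalIntegral.intervalIntegrable_rpow' (by norm_num)
  have h' := h.comp_sub_left b
  simp only [sub_zero, sub_sub_cancel] at h'
  exact (intervalIntegrable_iff_integrableOn_Ioo_of_le hab).mp h'.symm

lemma setLIntegral_ofReal_div_sqrt_sub_lt_top {f : ℝ → ℝ} {a b c : ℝ} (hab : a ≤ b)
    (hf : ∀ t ∈ Ioo a b, f t ≤ c) :
    ∫⁻ t in Ioo a b, ENNReal.ofReal (f t / √(b - t)) < ⊤ := by
  have hint : IntegrableOn (fun t => c / √(b - t)) (Ioo a b) := by
    refine IntegrableOn.congr_fun ((integrableOn_Ioo_sub_rpow_neg_half hab).const_mul c)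
      (fun t ht => ?_) measurableSet_Ioo
    rw [Real.rpow_neg (sub_pos.mpr ht.2).le, ← Real.sqrt_eq_rpow, div_eq_mul_inv]
  calc ∫⁻ t in Ioo a b, ENNReal.ofReal (f t / √(b - t))
      ≤ ∫⁻ t in Ioo a b, ENNReal.ofReal (c / √(b - t)) :=
        setLIntegral_mono' measurableSet_Ioo fun t ht =>
          ENNReal.ofReal_le_ofReal (div_le_div_of_nonneg_right (hf t ht) (Real.sqrt_nonneg _))
    _ < ⊤ := hint.setLIntegral_lt_top

lemma lt_of_setLIntegral_inv_div_sqrt_eq_top {A Ainv : ℝ → ℝ} {K : ℝ}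
    (hAmono : StrictMonoOn A (Ici 0))
    (hAinvR : ∀ t : ℝ, 0 ≤ t → t < K → 0 ≤ Ainv t ∧ A (Ainv t) = t) (hK : 0 ≤ K)
    (hdiv : ∫⁻ t in Ioo 0 K, ENNReal.ofReal (Ainv t / √(K - t)) = ⊤)
    {s : ℝ} (hs : 0 ≤ s) : A s < K := by
  by_contra! hge
  have hAinv_le : ∀ t ∈ Ioo 0 K, Ainv t ≤ s := fun t ht => by
    obtain ⟨hAinv_nonneg, hAAinv⟩ := hAinvR t ht.1.le ht.2
    refine ((hAmono.lt_iff_lt hAinv_nonneg hs).mp ?_).le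
    linarith [ht.2]
  exact (setLIntegral_ofReal_div_sqrt_sub_lt_top hK hAinv_le).ne hdiv

theorem stmt_6_general (A Ainv : ℝ → ℝ)
    (hAmono : StrictMonoOn A (Set.Ici 0))
    (K₀ : ℝ) (hK₀ : 0 < K₀)
    (hAinvR : ∀ t : ℝ, 0 ≤ t → t < K₀ → 0 ≤ Ainv t ∧ A (Ainv t) = t)
    (hdiv : ∫⁻ t in Set.Ioo (0:ℝ) K₀, ENNReal.ofReal (Ainv t / Real.sqrt (K₀ - t)) = ⊤) :
    BddAbove (A '' Set.Ici 0) ∧ sSup (A '' Set.Ici 0) = K₀ := by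
  have himage_lt : A '' Ici 0 ⊆ Iio K₀ := by
    rintro _ ⟨s, hs, rfl⟩
    exact lt_of_setLIntegral_inv_div_sqrt_eq_top hAmono hAinvR hK₀.le hdiv hs
  have hIco_sub : Ico 0 K₀ ⊆ A '' Ici 0 := fun t ht => by
    obtain ⟨hAinv_nonneg, hAAinv⟩ := hAinvR t ht.1 ht.2
    exact ⟨Ainv t, hAinv_nonneg, hAAinv⟩
  have hlub : IsLUB (A '' Ici 0) K₀ :=
    (isLUB_Ico hK₀).of_subset_of_superset isLUB_Iio hIco_sub himage_lt
  exact ⟨hlub.bddAbove, hlub.csSup_eq ((nonempty_Ico.mpr hK₀).mono hIco_sub)⟩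

/-- Let `𝒜 : [0,∞) → ℝ` be continuous and strictly increasing with `𝒜(0) = 0`,
and let `K₀ > 0` be such that every `t ∈ [0, K₀)` lies in the range of 𝒜. If
`∫_0^{K₀} 𝒜⁻¹(t)/√(K₀ − t) dt = +∞`, then 𝒜 is bounded and `sup_{s ≥ 0} 𝒜(s) = K₀`. -/
theorem stmt_6 (A Ainv : ℝ → ℝ)
    (hAcont : ContinuousOn A (Set.Ici 0))
    (hAmono : StrictMonoOn A (Set.Ici 0))
    (hA0 : A 0 = 0)
    (hAinvL : ∀ s : ℝ, 0 ≤ s → Ainv (A s) = s)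
    (K₀ : ℝ) (hK₀ : 0 < K₀)
    (hrange : ∀ t : ℝ, 0 ≤ t → t < K₀ → ∃ s, 0 ≤ s ∧ A s = t)
    (hAinvR : ∀ t : ℝ, 0 ≤ t → t < K₀ → 0 ≤ Ainv t ∧ A (Ainv t) = t)
    (hdiv : ∫⁻ t in Set.Ioo (0:ℝ) K₀, ENNReal.ofReal (Ainv t / Real.sqrt (K₀ - t)) = ⊤) :
    BddAbove (A '' Set.Ici 0) ∧ sSup (A '' Set.Ici 0) = K₀ :=
  stmt_6_general A Ainv hAmono K₀ hK₀ hAinvR hdiv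
end

section
/- Let b > 0, ρ > 0 and real numbers δ, K with 0 < δ < K. Then there exist α ∈ (0,1] (with sinh(bα)/sinh(b) < sup 𝒜) and real numbers h₀, h₁ with δ < h₁ < h₀ < K/2 + δ/2 such that h₁ = f(ρ+1) and h₀ = f(2ρ+1), where f(r) = δ + ∫_1^r 𝒜⁻¹( sinh(bα)/sinh(b s) ) ds. -/
/-!
Since `sinh (b α) / sinh b → 0` as `α → 0⁺`, for small `α` the integrand
`𝒜⁻¹ (sinh (b α) / sinh (b s))` takes values in `(0, c)` for all `s ≥ 1`, where `c` is chosen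
with `2ρc < (K - δ) / 2`. The integrand is positive and antitone in `s`, so `f` is strictly
increasing on `[1, ∞)`, while `f (2ρ + 1) ≤ δ + 2ρc`.
-/

open MeasureTheory intervalIntegral Set Filter Topology Real

section RightInverse

variable {A Ainv : ℝ → ℝ} {c t : ℝ}

theorem rightInv_mem_Ico_of_lt (hA : StrictMonoOn A (Ici 0))
    (hAinv : ∀ t : ℝ, 0 ≤ t → (∃ s, 0 ≤ s ∧ t < A s) → 0 ≤ Ainv t ∧ A (Ainv t) = t)
    (hc : 0 ≤ c) (ht : 0 ≤ t) (htc : t < A c) : Ainv t ∈ Ico 0 c ∧ A (Ainv t) = t := by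
  obtain ⟨h0, heq⟩ := hAinv t ht ⟨c, hc, htc⟩
  exact ⟨⟨h0, (hA.lt_iff_lt h0 hc).1 (by rwa [heq])⟩, heq⟩

theorem rightInv_mem_Ioo (hA : StrictMonoOn A (Ici 0)) (hA0 : A 0 = 0)
    (hAinv : ∀ t : ℝ, 0 ≤ t → (∃ s, 0 ≤ s ∧ t < A s) → 0 ≤ Ainv t ∧ A (Ainv t) = t)
    (hc : 0 ≤ c) (ht : t ∈ Ioo 0 (A c)) : Ainv t ∈ Ioo 0 c := by
  obtain ⟨⟨h0, hlt⟩, heq⟩ := rightInv_mem_Ico_of_lt hA hAinv hc ht.1.le ht.2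
  refine ⟨h0.lt_of_ne fun h ↦ ht.1.ne ?_, hlt⟩
  rw [← heq, ← h, hA0]

theorem rightInv_monotoneOn (hA : StrictMonoOn A (Ici 0))
    (hAinv : ∀ t : ℝ, 0 ≤ t → (∃ s, 0 ≤ s ∧ t < A s) → 0 ≤ Ainv t ∧ A (Ainv t) = t)
    (hc : 0 ≤ c) : MonotoneOn Ainv (Ico 0 (A c)) := by
  intro t ht t' ht' htt'
  obtain ⟨⟨h0, -⟩, heq⟩ := rightInv_mem_Ico_of_lt hA hAinv hc ht.1 ht.2
  obtain ⟨⟨h0', -⟩, heq'⟩ := rightInv_mem_Ico_of_lt hA hAinv hc ht'.1 ht'.2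
  exact (hA.le_iff_le h0 h0').1 (by rwa [heq, heq'])

end RightInverse

section SinhRatio

variable {b u s ε : ℝ}

theorem div_sinh_mul_antitoneOn (hb : 0 < b) (hu : 0 ≤ u) :
    AntitoneOn (fun s ↦ u / sinh (b * s)) (Ioi 0) := fun _ hs _ _ hss' ↦
  div_le_div_of_nonneg_left hu (sinh_pos_iff.2 (mul_pos hb hs))
    (sinh_le_sinh.2 (mul_le_mul_of_nonneg_left hss' hb.le))

theorem div_sinh_mul_mem_Ioc (hb : 0 < b) (hu : 0 < u) (hs : 1 ≤ s) :
    u / sinh (b * s) ∈ Ioc 0 (u / sinh b) :=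
  ⟨div_pos hu (sinh_pos_iff.2 (mul_pos hb (one_pos.trans_le hs))), by
    simpa using div_sinh_mul_antitoneOn hb hu.le (mem_Ioi.2 one_pos)
      (mem_Ioi.2 (one_pos.trans_le hs)) hs⟩

theorem exists_sinh_mul_div_sinh_lt (hε : 0 < ε) :
    ∃ α ∈ Ioc (0 : ℝ) 1, sinh (b * α) / sinh b < ε := by
  have hlim : Tendsto (fun α ↦ sinh (b * α) / sinh b) (𝓝[>] 0) (𝓝 0) := by
    have hcont : Continuous fun α ↦ sinh (b * α) / sinh b := by fun_prop
    simpa using hcont.continuousAt.tendsto.mono_left (nhdsWithin_le_nhds (a := (0 : ℝ)))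
  have hsmall : ∀ᶠ α in 𝓝[>] 0, α ∈ Ioc (0 : ℝ) 1 := Ioc_mem_nhdsGT one_pos
  exact (hsmall.and (hlim.eventually (gt_mem_nhds hε))).exists

end SinhRatio

section AntitoneIntegral

variable {g : ℝ → ℝ} {a x y c : ℝ}

theorem intervalIntegrable_of_antitoneOn_Ici (hg : AntitoneOn g (Ici a)) (hx : a ≤ x)
    (hy : a ≤ y) : IntervalIntegrable g volume x y :=
  (hg.mono fun _ hz ↦ (le_inf hx hy).trans hz.1).intervalIntegrable

theorem integral_pos_of_antitoneOn_Ici (hg : AntitoneOn g (Ici a)) (hpos : ∀ s ≥ a, 0 < g s)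
    (hx : a ≤ x) (hxy : x < y) : 0 < ∫ s in x..y, g s :=
  intervalIntegral_pos_of_pos_on (intervalIntegrable_of_antitoneOn_Ici hg hx (hx.trans hxy.le))
    (fun s hs ↦ hpos s (hx.trans hs.1.le)) hxy

theorem integral_lt_integral_of_antitoneOn_Ici (hg : AntitoneOn g (Ici a))
    (hpos : ∀ s ≥ a, 0 < g s) (hx : a ≤ x) (hxy : x < y) :
    ∫ s in a..x, g s < ∫ s in a..y, g s := by
  have hsplit := integral_add_adjacent_intervals (intervalIntegrable_of_antitoneOn_Ici hg le_rfl hx)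
    (intervalIntegrable_of_antitoneOn_Ici hg hx (hx.trans hxy.le))
  exact hsplit ▸ lt_add_of_pos_right _ (integral_pos_of_antitoneOn_Ici hg hpos hx hxy)

theorem integral_le_mul_sub_of_le (hxy : x ≤ y) (hg : ∀ s ∈ Ioc x y, g s ∈ Icc 0 c) :
    ∫ s in x..y, g s ≤ c * (y - x) := by
  calc ∫ s in x..y, g s ≤ ‖∫ s in x..y, g s‖ := le_norm_self _
    _ ≤ c * |y - x| := norm_integral_le_of_norm_le_const fun s hs ↦ by
      rw [uIoc_of_le hxy] at hs
      rw [norm_of_nonneg (hg s hs).1]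
      exact (hg s hs).2
    _ = c * (y - x) := by rw [abs_of_nonneg (sub_nonneg.2 hxy)]

end AntitoneIntegral

theorem stmt_10_general (A Ainv : ℝ → ℝ)
    (hA : ContDiffOn ℝ 1 A (Set.Ici 0))
    (hA0 : A 0 = 0)
    (hA' : ∀ s : ℝ, 0 < s → 0 < deriv A s)
    (hAinvR : ∀ t : ℝ, 0 ≤ t → (∃ s, 0 ≤ s ∧ t < A s) → 0 ≤ Ainv t ∧ A (Ainv t) = t)
    (b ρ δ K : ℝ) (hb : 0 < b) (hρ : 0 < ρ) (hδK : δ < K) :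
    ∃ α ∈ Set.Ioc (0:ℝ) 1,
      (∃ s, 0 ≤ s ∧ Real.sinh (b * α) / Real.sinh b < A s) ∧
      ∃ h₀ h₁ : ℝ,
        δ < h₁ ∧ h₁ < h₀ ∧ h₀ < K / 2 + δ / 2 ∧
        h₁ = δ + ∫ s in (1:ℝ)..(ρ + 1), Ainv (Real.sinh (b * α) / Real.sinh (b * s)) ∧
        h₀ = δ + ∫ s in (1:ℝ)..(2 * ρ + 1), Ainv (Real.sinh (b * α) / Real.sinh (b * s)) := by
  have hmono : StrictMonoOn A (Ici 0) :=
    strictMonoOn_of_deriv_pos (convex_Ici 0) hA.continuousOn fun x hx ↦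
      hA' x (by rwa [interior_Ici] at hx)
  obtain ⟨c, hc, hcK⟩ : ∃ c > 0, c * (2 * ρ) < (K - δ) / 2 :=
    ⟨(K - δ) / (8 * ρ), div_pos (by linarith) (by linarith), by field_simp; linarith⟩
  have h1ρ : (1 : ℝ) < ρ + 1 := by linarith
  have hρ2ρ : ρ + 1 < 2 * ρ + 1 := by linarith
  obtain ⟨α, hα, hαc⟩ := exists_sinh_mul_div_sinh_lt (hA0 ▸ hmono self_mem_Ici hc.le hc)
  set g := fun s ↦ Ainv (sinh (b * α) / sinh (b * s))
  have hratio (s : ℝ) (hs : 1 ≤ s) : sinh (b * α) / sinh (b * s) ∈ Ioo 0 (A c) :=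
    have h := div_sinh_mul_mem_Ioc hb (sinh_pos_iff.2 (mul_pos hb hα.1)) hs
    ⟨h.1, h.2.trans_lt hαc⟩
  have hg (s : ℝ) (hs : 1 ≤ s) : g s ∈ Ioo 0 c :=
    rightInv_mem_Ioo (Ainv := Ainv) hmono hA0 hAinvR hc.le (hratio s hs)
  have hanti : AntitoneOn g (Ici 1) := fun s hs s' hs' hss' ↦
    rightInv_monotoneOn hmono hAinvR hc.le (Ioo_subset_Ico_self (hratio s' hs'))
      (Ioo_subset_Ico_self (hratio s hs))
      (div_sinh_mul_antitoneOn hb (sinh_pos_iff.2 (mul_pos hb hα.1)).le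
        (mem_Ioi.2 (one_pos.trans_le hs)) (mem_Ioi.2 (one_pos.trans_le hs')) hss')
  have hbound := integral_le_mul_sub_of_le (h1ρ.trans hρ2ρ).le fun s hs ↦
    Ioo_subset_Icc_self (hg s hs.1.le)
  refine ⟨α, hα, ⟨c, hc.le, hαc⟩, δ + ∫ s in (1 : ℝ)..(2 * ρ + 1), g s,
    δ + ∫ s in (1 : ℝ)..(ρ + 1), g s, ?_, ?_, by linarith, rfl, rfl⟩
  · exact lt_add_of_pos_right δ
      (integral_pos_of_antitoneOn_Ici hanti (fun s hs ↦ (hg s hs).1) le_rfl h1ρ)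
  · exact (add_lt_add_iff_left δ).2
      (integral_lt_integral_of_antitoneOn_Ici hanti (fun s hs ↦ (hg s hs).1) h1ρ.le hρ2ρ)

/-- Let `b > 0`, `ρ > 0` and `0 < δ < K`. Then there exist `α ∈ (0,1]` (with
`sinh(bα)/sinh(b) < sup 𝒜`, encoded as `∃ s ≥ 0, sinh(bα)/sinh(b) < 𝒜(s)`) and reals
`h₀, h₁` with `δ < h₁ < h₀ < K/2 + δ/2` such that `h₁ = f(ρ+1)` and `h₀ = f(2ρ+1)`, where
`f(r) = δ + ∫_1^r 𝒜⁻¹( sinh(bα)/sinh(b s) ) ds`. -/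
theorem stmt_10 (A Ainv : ℝ → ℝ)
    (hA : ContDiffOn ℝ 1 A (Set.Ici 0))
    (hA0 : A 0 = 0)
    (hA' : ∀ s : ℝ, 0 < s → 0 < deriv A s)
    (hAinvL : ∀ s : ℝ, 0 ≤ s → Ainv (A s) = s)
    (hAinvR : ∀ t : ℝ, 0 ≤ t → (∃ s, 0 ≤ s ∧ t < A s) → 0 ≤ Ainv t ∧ A (Ainv t) = t)
    (b ρ δ K : ℝ) (hb : 0 < b) (hρ : 0 < ρ) (hδ : 0 < δ) (hδK : δ < K) :
    ∃ α ∈ Set.Ioc (0:ℝ) 1,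
      (∃ s, 0 ≤ s ∧ Real.sinh (b * α) / Real.sinh b < A s) ∧
      ∃ h₀ h₁ : ℝ,
        δ < h₁ ∧ h₁ < h₀ ∧ h₀ < K / 2 + δ / 2 ∧
        h₁ = δ + ∫ s in (1:ℝ)..(ρ + 1), Ainv (Real.sinh (b * α) / Real.sinh (b * s)) ∧
        h₀ = δ + ∫ s in (1:ℝ)..(2 * ρ + 1), Ainv (Real.sinh (b * α) / Real.sinh (b * s)) :=
  stmt_10_general A Ainv hA hA0 hA' hAinvR b ρ δ K hb hρ hδK
end

section
/- Let n ≥ 2 be an integer, α ∈ (0,1], δ ∈ ℝ, and assume (sinh(α)/sinh(1))^{n-1} < sup_{s ≥ 0} 𝒜(s). Define f(r) = δ + ∫_1^r 𝒜⁻¹( (sinh α)^{n-1}/(sinh s)^{n-1} ) ds for r ≥ 1. Then f is continuously differentiable on [1,∞) and twice continuously differentiable on (1,∞), f(1) = δ, f'(r) = 𝒜⁻¹( (sinh α)^{n-1}/(sinh r)^{n-1} ) > 0 (so f is strictly increasing), and f satisfies the ordinary differential equation 𝒜'(f'(r))·f''(r) + (n-1)·coth(r)·𝒜(f'(r)) =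 0 for all r > 1. -/
/-!
Since `𝒜` is C¹ with positive derivative, its right inverse is C¹ on `(0, sup 𝒜)` by the
one-dimensional inverse function theorem. The hypothesis on `α` places
`(sinh α)^{n-1} / (sinh r)^{n-1}` in that interval for every `r ≥ 1`, so the integrand is C¹
and positive on `[1, ∞)`, and the fundamental theorem of calculus gives the regularity of `f`
together with `f' = 𝒜⁻¹((sinh α)^{n-1} / (sinh r)^{n-1})`. The ODE is obtained by
differentiating `𝒜(f'(r)) = (sinh α)^{n-1} / (sinh r)^{n-1}`.
-/

open MeasureTheory intervalIntegral

open Set Filter Topology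

theorem StrictMonoOn.continuousAt_of_rightInvOn {α β : Type*} [LinearOrder α]
    [TopologicalSpace α] [OrderTopology α] [DenselyOrdered α] [LinearOrder β]
    [TopologicalSpace β] [OrderTopology β] {A : α → β} {B : β → α} {s : Set α} {J : Set β} {t : β}
    (hA : StrictMonoOn A s) (hAc : ContinuousAt A (B t)) (hs : s ∈ 𝓝 (B t)) (hJ : J ∈ 𝓝 t)
    (hBJ : MapsTo B J s) (hAB : RightInvOn B A J) : ContinuousAt B t := by
  have hmono : MonotoneOn B J := fun y hy z hz hyz => by
    rw [← hA.le_iff_le (hBJ hy) (hBJ hz), hAB hy, hAB hz]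
    exact hyz
  refine continuousAt_of_monotoneOn_of_image_mem_nhds hmono hJ ?_
  have hpre : s ∩ A ⁻¹' J ∈ 𝓝 (B t) :=
    inter_mem hs (hAc.preimage_mem_nhds (by rwa [hAB (mem_of_mem_nhds hJ)]))
  refine mem_of_superset hpre fun x ⟨hxs, hxJ⟩ => ⟨A x, hxJ, ?_⟩
  exact hA.injOn (hBJ hxJ) hxs (hAB hxJ)

section RightInverse

variable {A B : ℝ → ℝ} {U J : Set ℝ}

theorem ContDiffOn.hasDerivAt_of_rightInvOn (hA : ContDiffOn ℝ 1 A U) (hU : IsOpen U)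
    (hUc : Convex ℝ U) (hA' : ∀ x ∈ U, 0 < deriv A x) (hJ : IsOpen J) (hBJ : MapsTo B J U)
    (hAB : RightInvOn B A J) {t : ℝ} (ht : t ∈ J) : HasDerivAt B (deriv A (B t))⁻¹ t := by
  have hAd : DifferentiableAt ℝ A (B t) :=
    (hA.differentiableOn one_ne_zero).differentiableAt (hU.mem_nhds (hBJ ht))
  have hmono : StrictMonoOn A U :=
    strictMonoOn_of_deriv_pos hUc hA.continuousOn (by rwa [hU.interior_eq])
  have hBc : ContinuousAt B t :=
    hmono.continuousAt_of_rightInvOn hAd.continuousAt (hU.mem_nhds (hBJ ht))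
      (hJ.mem_nhds ht) hBJ hAB
  exact HasDerivAt.of_local_left_inverse hBc hAd.hasDerivAt (hA' _ (hBJ ht)).ne'
    (eventually_of_mem (hJ.mem_nhds ht) fun y hy => hAB hy)

theorem ContDiffOn.contDiffOn_of_rightInvOn (hA : ContDiffOn ℝ 1 A U) (hU : IsOpen U)
    (hUc : Convex ℝ U) (hA' : ∀ x ∈ U, 0 < deriv A x) (hJ : IsOpen J) (hBJ : MapsTo B J U)
    (hAB : RightInvOn B A J) : ContDiffOn ℝ 1 B J := by
  have hB' := fun t (ht : t ∈ J) => hA.hasDerivAt_of_rightInvOn hU hUc hA' hJ hBJ hAB ht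
  have hBc : ContinuousOn B J := fun t ht => (hB' t ht).continuousAt.continuousWithinAt
  have hA'c : ContinuousOn (deriv A) U := by
    simpa using (hA.continuousOn_deriv_of_isOpen hU le_rfl)
  rw [show (1 : WithTop ℕ∞) = 0 + 1 from rfl, contDiffOn_succ_iff_deriv_of_isOpen hJ]
  refine ⟨fun t ht => (hB' t ht).differentiableAt.differentiableWithinAt, by simp, ?_⟩
  rw [contDiffOn_zero]
  refine ((hA'c.comp hBc hBJ).inv₀ fun t ht => (hA' _ (hBJ ht)).ne').congr fun t ht => ?_
  exact (hB' t ht).deriv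

end RightInverse

theorem hasDerivAt_div_sinh_pow (c : ℝ) (m : ℕ) {r : ℝ} (hr : Real.sinh r ≠ 0) :
    HasDerivAt (fun s => c / Real.sinh s ^ m)
      (-m * (Real.cosh r / Real.sinh r) * (c / Real.sinh r ^ m)) r := by
  refine ((hasDerivAt_const r c).div ((Real.hasDerivAt_sinh r).pow m)
    (pow_ne_zero m hr)).congr_deriv ?_
  rcases m with _ | k
  · simp
  · simp only [Pi.pow_apply]
    field_simp
    push_cast
    ring

theorem contDiffOn_div_sinh_pow (c : ℝ) (m : ℕ) {k : WithTop ℕ∞} :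
    ContDiffOn ℝ k (fun s => c / Real.sinh s ^ m) (Ioi 0) :=
  contDiffOn_const.div (Real.contDiff_sinh.pow m).contDiffOn
    fun _ hs => pow_ne_zero m (Real.sinh_pos_iff.2 hs).ne'

theorem mapsTo_div_sinh_pow_Ici {c : ℝ} (hc : 0 < c) (m : ℕ) {a : ℝ} (ha : 0 < a) :
    MapsTo (fun s => c / Real.sinh s ^ m) (Ici a) (Ioc 0 (c / Real.sinh a ^ m)) := fun _ hr =>
  ⟨div_pos hc (pow_pos (Real.sinh_pos_iff.2 (ha.trans_le hr)) m),
    div_le_div_of_nonneg_left hc.le (pow_pos (Real.sinh_pos_iff.2 ha) m)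
      (pow_le_pow_left₀ (Real.sinh_pos_iff.2 ha).le (Real.sinh_le_sinh.2 hr) m)⟩

theorem deriv_mul_deriv_deriv_add_coth_mul_eq_zero {A f : ℝ → ℝ} {c r : ℝ} {m : ℕ}
    (hAf : ∀ᶠ s in 𝓝 r, A (deriv f s) = c / Real.sinh s ^ m)
    (hA : DifferentiableAt ℝ A (deriv f r)) (hf : DifferentiableAt ℝ (deriv f) r)
    (hr : Real.sinh r ≠ 0) :
    deriv A (deriv f r) * deriv (deriv f) r + m * (Real.cosh r / Real.sinh r) * A (deriv f r)
      = 0 := by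
  have hcomp := (hA.hasDerivAt.comp r hf.hasDerivAt).congr_of_eventuallyEq
    (hAf.mono fun _ h => h.symm)
  rw [hcomp.unique (hasDerivAt_div_sinh_pow c m hr), hAf.self_of_nhds]
  ring

section IntegralFrom

variable {E : Type*} [NormedAddCommGroup E] [NormedSpace ℝ E] [CompleteSpace E]
  {g : ℝ → E} {a r : ℝ}

theorem hasDerivAt_integral_of_continuousOn_Ici (hg : ContinuousOn g (Ici a)) (hr : a < r) :
    HasDerivAt (fun x => ∫ s in a..x, g s) (g r) r :=
  integral_hasDerivAt_right ((hg.mono Icc_subset_Ici_self).intervalIntegrable_of_Icc hr.le)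
    ⟨Ici a, Ici_mem_nhds hr, hg.aestronglyMeasurable measurableSet_Ici⟩
    (hg.continuousAt (Ici_mem_nhds hr))

theorem hasDerivWithinAt_integral_of_continuousOn_Ici (hg : ContinuousOn g (Ici a))
    (hr : a ≤ r) : HasDerivWithinAt (fun x => ∫ s in a..x, g s) (g r) (Ici a) r := by
  rcases hr.eq_or_lt with rfl | hr
  · exact integral_hasDerivWithinAt_right (by simp)
      ⟨Ioi a, self_mem_nhdsWithin,
        (hg.mono Ioi_subset_Ici_self).aestronglyMeasurable measurableSet_Ioi⟩
      ((hg a self_mem_Ici).mono Ioi_subset_Ici_self)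
  · exact (hasDerivAt_integral_of_continuousOn_Ici hg hr).hasDerivWithinAt

theorem contDiffOn_integral_Ici (hg : ContinuousOn g (Ici a)) :
    ContDiffOn ℝ 1 (fun x => ∫ s in a..x, g s) (Ici a) := by
  rw [show (1 : WithTop ℕ∞) = 0 + 1 from rfl, contDiffOn_succ_iff_derivWithin (uniqueDiffOn_Ici a)]
  refine ⟨fun r hr => (hasDerivWithinAt_integral_of_continuousOn_Ici hg hr).differentiableWithinAt,
    by simp, ?_⟩
  rw [contDiffOn_zero]
  exact hg.congr fun r hr =>
    (hasDerivWithinAt_integral_of_continuousOn_Ici hg hr).derivWithin (uniqueDiffOn_Ici a r hr)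

theorem contDiffOn_integral_Ioi {n : ℕ} (hg : ContinuousOn g (Ici a))
    (hg' : ContDiffOn ℝ n g (Ioi a)) :
    ContDiffOn ℝ (n + 1) (fun x => ∫ s in a..x, g s) (Ioi a) := by
  rw [contDiffOn_succ_iff_deriv_of_isOpen isOpen_Ioi]
  refine ⟨fun r hr => (hasDerivAt_integral_of_continuousOn_Ici hg hr).differentiableAt
    |>.differentiableWithinAt, by simp, ?_⟩
  exact hg'.congr fun r hr => (hasDerivAt_integral_of_continuousOn_Ici hg hr).deriv

end IntegralFrom

theorem stmt_11_general (A Ainv : ℝ → ℝ)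
    (hA : ContDiffOn ℝ 1 A (Set.Ici 0))
    (hA0 : A 0 = 0)
    (hA' : ∀ s : ℝ, 0 < s → 0 < deriv A s)
    (hAinvR : ∀ t : ℝ, 0 ≤ t → (∃ s, 0 ≤ s ∧ t < A s) → 0 ≤ Ainv t ∧ A (Ainv t) = t)
    (n : ℕ) (hn : 2 ≤ n) (α δ : ℝ) (hα : α ∈ Set.Ioc (0:ℝ) 1)
    (hsup : ∃ s, 0 ≤ s ∧ (Real.sinh α / Real.sinh 1) ^ (n - 1) < A s)
    (f : ℝ → ℝ)
    (hf : ∀ r : ℝ,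
      f r = δ + ∫ s in (1:ℝ)..r, Ainv (Real.sinh α ^ (n - 1) / Real.sinh s ^ (n - 1))) :
    ContDiffOn ℝ 1 f (Set.Ici 1) ∧
    ContDiffOn ℝ 2 f (Set.Ioi 1) ∧
    f 1 = δ ∧
    (∀ r : ℝ, 1 ≤ r →
      derivWithin f (Set.Ici 1) r = Ainv (Real.sinh α ^ (n - 1) / Real.sinh r ^ (n - 1)) ∧
      0 < derivWithin f (Set.Ici 1) r) ∧
    StrictMonoOn f (Set.Ici 1) ∧
    (∀ r : ℝ, 1 < r →
      deriv A (deriv f r) * deriv (deriv f) r +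
        ((n : ℝ) - 1) * (Real.cosh r / Real.sinh r) * A (deriv f r) = 0) := by
  obtain ⟨s₀, hs₀, hs₀A⟩ := hsup
  set c := Real.sinh α ^ (n - 1)
  set g : ℝ → ℝ := fun s => Ainv (c / Real.sinh s ^ (n - 1))
  have hAinv : ∀ t ∈ Ioo 0 (A s₀), 0 < Ainv t ∧ A (Ainv t) = t := fun t ht => by
    obtain ⟨hnonneg, hinv⟩ := hAinvR t ht.1.le ⟨s₀, hs₀, ht.2⟩
    refine ⟨hnonneg.lt_of_ne fun h0 => ht.1.ne ?_, hinv⟩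
    rw [← hinv, ← h0, hA0]
  have hmaps : MapsTo (fun s => c / Real.sinh s ^ (n - 1)) (Ici 1) (Ioo 0 (A s₀)) :=
    (mapsTo_div_sinh_pow_Ici (pow_pos (Real.sinh_pos_iff.2 hα.1) _) _ one_pos).mono_right
      (Ioc_subset_Ioo_right (by rwa [← div_pow]))
  have hg : ContDiffOn ℝ 1 g (Ici 1) :=
    ((hA.mono Ioi_subset_Ici_self).contDiffOn_of_rightInvOn isOpen_Ioi (convex_Ioi 0) hA'
      isOpen_Ioo (fun t ht => (hAinv t ht).1) (fun t ht => (hAinv t ht).2)).comp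
      ((contDiffOn_div_sinh_pow c _).mono (Ici_subset_Ioi.2 one_pos)) hmaps
  have hgA : ∀ r ∈ Ici 1, 0 < g r ∧ A (g r) = c / Real.sinh r ^ (n - 1) := fun r hr =>
    hAinv _ (hmaps hr)
  replace hf : f = fun r => δ + ∫ s in (1:ℝ)..r, g s := funext hf
  have hfC1 : ContDiffOn ℝ 1 f (Ici 1) :=
    hf ▸ contDiffOn_const.add (contDiffOn_integral_Ici hg.continuousOn)
  have hderivWithin : ∀ r ∈ Ici 1, HasDerivWithinAt f (g r) (Ici 1) r := fun r hr =>
    hf ▸ (hasDerivWithinAt_integral_of_continuousOn_Ici hg.continuousOn hr).const_add δ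
  have hderiv : ∀ r ∈ Ioi 1, deriv f r = g r := fun r hr =>
    hf ▸ ((hasDerivAt_integral_of_continuousOn_Ici hg.continuousOn hr).const_add δ).deriv
  refine ⟨hfC1, hf ▸ contDiffOn_const.add (contDiffOn_integral_Ioi (n := 1) hg.continuousOn
      (hg.mono Ioi_subset_Ici_self)), by simp [hf], fun r hr => ?_, ?_, fun r hr => ?_⟩
  · rw [(hderivWithin r hr).derivWithin (uniqueDiffOn_Ici 1 r hr)]
    exact ⟨rfl, (hgA r hr).1⟩
  · refine strictMonoOn_of_deriv_pos (convex_Ici 1) hfC1.continuousOn fun r hr => ?_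
    rw [interior_Ici] at hr
    exact (hderiv r hr).symm ▸ (hgA r (Ioi_subset_Ici_self hr)).1
  · have hderiv_nhds : deriv f =ᶠ[𝓝 r] g := eventually_of_mem (Ioi_mem_nhds hr) hderiv
    rw [← Nat.cast_pred (by omega)]
    refine deriv_mul_deriv_deriv_add_coth_mul_eq_zero (c := c) ?_ ?_ ?_
      (Real.sinh_pos_iff.2 (zero_lt_one.trans hr)).ne'
    · filter_upwards [Ioi_mem_nhds hr] with s hs
      rw [hderiv s hs]
      exact (hgA s (Ioi_subset_Ici_self hs)).2
    · rw [hderiv r hr]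
      exact (hA.differentiableOn one_ne_zero).differentiableAt (Ici_mem_nhds (hgA r hr.le).1)
    · exact ((hg.differentiableOn one_ne_zero).differentiableAt
        (Ici_mem_nhds hr)).congr_of_eventuallyEq hderiv_nhds

/-- Let `n ≥ 2`, `α ∈ (0,1]`, `δ ∈ ℝ`, and assume
`(sinh(α)/sinh(1))^{n-1} < sup_{s ≥ 0} 𝒜(s)` (encoded as an existential). Define
`f(r) = δ + ∫_1^r 𝒜⁻¹( (sinh α)^{n-1}/(sinh s)^{n-1} ) ds` for `r ≥ 1`. Then `f` is C¹ on
`[1,∞)` and C² on `(1,∞)`, `f(1) = δ`, `f'(r) = 𝒜⁻¹( (sinh α)^{n-1}/(sinh r)^{n-1} ) > 0`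
(so `f` is strictly increasing), and `𝒜'(f'(r))·f''(r) + (n-1)·coth(r)·𝒜(f'(r)) = 0` for
all `r > 1`. -/
theorem stmt_11 (A Ainv : ℝ → ℝ)
    (hA : ContDiffOn ℝ 1 A (Set.Ici 0))
    (hA0 : A 0 = 0)
    (hA' : ∀ s : ℝ, 0 < s → 0 < deriv A s)
    (hAinvL : ∀ s : ℝ, 0 ≤ s → Ainv (A s) = s)
    (hAinvR : ∀ t : ℝ, 0 ≤ t → (∃ s, 0 ≤ s ∧ t < A s) → 0 ≤ Ainv t ∧ A (Ainv t) = t)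
    (n : ℕ) (hn : 2 ≤ n) (α δ : ℝ) (hα : α ∈ Set.Ioc (0:ℝ) 1)
    (hsup : ∃ s, 0 ≤ s ∧ (Real.sinh α / Real.sinh 1) ^ (n - 1) < A s)
    (f : ℝ → ℝ)
    (hf : ∀ r : ℝ,
      f r = δ + ∫ s in (1:ℝ)..r, Ainv (Real.sinh α ^ (n - 1) / Real.sinh s ^ (n - 1))) :
    ContDiffOn ℝ 1 f (Set.Ici 1) ∧
    ContDiffOn ℝ 2 f (Set.Ioi 1) ∧
    f 1 = δ ∧
    (∀ r : ℝ, 1 ≤ r →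
      derivWithin f (Set.Ici 1) r = Ainv (Real.sinh α ^ (n - 1) / Real.sinh r ^ (n - 1)) ∧
      0 < derivWithin f (Set.Ici 1) r) ∧
    StrictMonoOn f (Set.Ici 1) ∧
    (∀ r : ℝ, 1 < r →
      deriv A (deriv f r) * deriv (deriv f) r +
        ((n : ℝ) - 1) * (Real.cosh r / Real.sinh r) * A (deriv f r) = 0) :=
  stmt_11_general A Ainv hA hA0 hA' hAinvR n hn α δ hα hsup f hf
end

section
/- Let n ≥ 2 be an integer and a > 0; assume moreover that 𝒜 is bounded and set K₀ := sup_{s ≥ 0} 𝒜(s). If ∫_0^{K₀} 𝒜⁻¹(t)/√(K₀ − t) dt = +∞, then ∫_0^1 𝒜⁻¹( K₀·(cosh(a t))^{-(n-1)} ) dt = +∞ (as a Lebesgue integral of a nonnegative function). -/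
/-!
Substitute `t = φ u := K₀ / cosh (a u) ^ m` with `m = n - 1`, a decreasing bijection of `(0, 1)`
onto `(φ 1, K₀)`. Writing `y = 1 / cosh (a u)`, one has
`φ'² = m² a² K₀² y^{2m} (1 - y²) ≤ 2 m² a² K₀ (K₀ - φ)`, so the Jacobian `|φ'|` absorbs the weight
`1 / √(K₀ - t)` up to a constant and `∫_{φ 1}^{K₀} 𝒜⁻¹(t) / √(K₀ - t) dt ≤ C ∫_0^1 𝒜⁻¹(φ u) du`.
The left side is infinite: `𝒜⁻¹` is monotone, so the integrand is bounded on `(0, φ 1]` and the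
divergence sits at `t = K₀`.
-/

open MeasureTheory Set Real

lemma pow_mul_one_sub_sq_le {y : ℝ} (h₀ : 0 ≤ y) (h₁ : y ≤ 1) {m : ℕ} (hm : m ≠ 0) :
    (y ^ m) ^ 2 * (1 - y ^ 2) ≤ 2 * (1 - y ^ m) := by
  have hym : y ^ m ≤ y := pow_le_of_le_one h₀ h₁ hm
  have hym1 : (y ^ m) ^ 2 ≤ 1 := pow_le_one₀ (by positivity) (hym.trans h₁)
  calc (y ^ m) ^ 2 * (1 - y ^ 2) ≤ 1 * ((1 - y) * 2) := by
        rw [show 1 - y ^ 2 = (1 - y) * (1 + y) by ring]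
        gcongr
        linarith
    _ ≤ 2 * (1 - y ^ m) := by linarith

lemma hasDerivAt_div_cosh_pow (K a : ℝ) (m : ℕ) (u : ℝ) :
    HasDerivAt (fun u => K / cosh (a * u) ^ m)
      (-(m * a * K * sinh (a * u) / cosh (a * u) ^ (m + 1))) u := by
  have hc : HasDerivAt (fun u => cosh (a * u)) (sinh (a * u) * a) u := by
    simpa using ((hasDerivAt_id u).const_mul a).cosh
  have hc0 := (cosh_pos (a * u)).ne'
  rcases m with _ | k
  · simpa using hasDerivAt_const u K
  have h := ((hc.pow (k + 1)).inv (pow_ne_zero _ hc0)).const_mul K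
  simp only [Pi.inv_apply, Pi.pow_apply, ← div_eq_mul_inv, Nat.add_sub_cancel] at h
  refine h.congr_deriv ?_
  field_simp
  ring

lemma sq_deriv_div_cosh_pow_le (K a : ℝ) {m : ℕ} (hm : m ≠ 0) (u : ℝ) :
    (m * a * K * sinh (a * u) / cosh (a * u) ^ (m + 1)) ^ 2 ≤
      2 * m ^ 2 * a ^ 2 * K * (K - K / cosh (a * u) ^ m) := by
  set c := cosh (a * u)
  have hsinh : sinh (a * u) ^ 2 = c ^ 2 - 1 := sinh_sq _
  have hcc : c * c⁻¹ = 1 := mul_inv_cancel₀ (cosh_pos _).ne'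
  have hy := pow_mul_one_sub_sq_le (inv_nonneg.2 (cosh_pos (a * u)).le)
    (inv_le_one_of_one_le₀ (one_le_cosh (a * u))) hm
  calc (m * a * K * sinh (a * u) / c ^ (m + 1)) ^ 2
      = (m ^ 2 * a ^ 2 * K ^ 2) * ((c⁻¹ ^ m) ^ 2 * (1 - c⁻¹ ^ 2)) := by
        rw [div_eq_mul_inv, ← inv_pow]
        linear_combination (m ^ 2 * a ^ 2 * K ^ 2 * (c⁻¹ ^ (m + 1)) ^ 2) * hsinh +
          (m ^ 2 * a ^ 2 * K ^ 2 * (c⁻¹ ^ m) ^ 2 * (c * c⁻¹ + 1)) * hcc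
    _ ≤ (m ^ 2 * a ^ 2 * K ^ 2) * (2 * (1 - c⁻¹ ^ m)) := by gcongr
    _ = 2 * m ^ 2 * a ^ 2 * K * (K - K / c ^ m) := by rw [inv_pow]; ring

lemma strictAntiOn_div_cosh_pow {K a : ℝ} (hK : 0 < K) (ha : 0 < a) {m : ℕ} (hm : m ≠ 0) :
    StrictAntiOn (fun u => K / cosh (a * u) ^ m) (Ici 0) := by
  intro u hu v hv huv
  have hcosh : cosh (a * u) < cosh (a * v) :=
    cosh_strictMonoOn (mem_Ici.2 (mul_nonneg ha.le hu)) (mem_Ici.2 (mul_nonneg ha.le hv))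
      (mul_lt_mul_of_pos_left huv ha)
  exact div_lt_div_of_pos_left hK (pow_pos (cosh_pos _) m)
    (pow_lt_pow_left₀ hcosh (cosh_pos _).le hm)

lemma image_Ioo_div_cosh_pow {K a : ℝ} (hK : 0 < K) (ha : 0 < a) {m : ℕ} (hm : m ≠ 0) :
    (fun u => K / cosh (a * u) ^ m) '' Ioo 0 1 = Ioo (K / cosh a ^ m) K := by
  have hcont : Continuous fun u => K / cosh (a * u) ^ m :=
    continuous_const.div (by fun_prop) fun u => (pow_pos (cosh_pos _) _).ne'
  simpa using hcont.continuousOn.image_Ioo_of_strictAntiOn zero_le_one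
    ((strictAntiOn_div_cosh_pow hK ha hm).mono Icc_subset_Ici_self)

lemma ofReal_abs_mul_ofReal_div_sqrt_le {d x s C : ℝ} (hx : 0 ≤ x) (hs : 0 < s)
    (hd : d ^ 2 ≤ C * s) :
    ENNReal.ofReal |d| * ENNReal.ofReal (x / √s) ≤ ENNReal.ofReal √C * ENNReal.ofReal x := by
  have hd' : |d| ≤ √C * √s := by rw [← sqrt_mul' C hs.le]; exact abs_le_sqrt hd
  rw [← ENNReal.ofReal_mul (abs_nonneg _), ← ENNReal.ofReal_mul (sqrt_nonneg _)]
  refine ENNReal.ofReal_le_ofReal ?_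
  calc |d| * (x / √s) ≤ √C * √s * (x / √s) := by gcongr
    _ = √C * x := by field_simp

lemma setLIntegral_Ioo_eq_top_of_le {g : ℝ → ENNReal} {a b c : ℝ} {M : ENNReal} (hM : M ≠ ⊤)
    (hg : ∀ t ∈ Ioc a b, g t ≤ M) (h : ∫⁻ t in Ioo a c, g t = ⊤) :
    ∫⁻ t in Ioo b c, g t = ⊤ := by
  have hfin : ∫⁻ t in Ioc a b, g t < ⊤ :=
    calc ∫⁻ t in Ioc a b, g t ≤ ∫⁻ _ in Ioc a b, M := setLIntegral_mono measurable_const hg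
      _ = M * ENNReal.ofReal (b - a) := by rw [setLIntegral_const, Real.volume_Ioc]
      _ < ⊤ := ENNReal.mul_lt_top hM.lt_top ENNReal.ofReal_lt_top
  have hsub : Ioo a c ⊆ Ioc a b ∪ Ioo b c := by
    intro t ⟨hat, htc⟩
    rcases le_or_gt t b with htb | hbt
    exacts [Or.inl ⟨hat, htb⟩, Or.inr ⟨hbt, htc⟩]
  have hle := (lintegral_mono_set (μ := volume) hsub).trans (lintegral_union_le g _ _)
  rw [h, top_le_iff] at hle
  exact (ENNReal.add_eq_top.1 hle).resolve_left hfin.ne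

lemma setLIntegral_Ioo_div_sqrt_eq_top {f : ℝ → ℝ} {b K : ℝ} (hf : MonotoneOn f (Ico 0 K))
    (hb : 0 ≤ b) (hbK : b < K) (hfb : 0 ≤ f b)
    (h : ∫⁻ t in Ioo 0 K, ENNReal.ofReal (f t / √(K - t)) = ⊤) :
    ∫⁻ t in Ioo b K, ENNReal.ofReal (f t / √(K - t)) = ⊤ := by
  refine setLIntegral_Ioo_eq_top_of_le (M := ENNReal.ofReal (f b / √(K - b)))
    ENNReal.ofReal_ne_top (fun t ht => ?_) h
  exact ENNReal.ofReal_le_ofReal (div_le_div₀ hfb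
    (hf ⟨ht.1.le, ht.2.trans_lt hbK⟩ ⟨hb, hbK⟩ ht.2)
    (sqrt_pos.2 (by linarith)) (sqrt_le_sqrt (by linarith [ht.2])))

lemma setLIntegral_eq_top_of_image {s : Set ℝ} {f f' : ℝ → ℝ} (hs : MeasurableSet s)
    (hf' : ∀ x ∈ s, HasDerivWithinAt f (f' x) s x) (hf : InjOn f s) {g h : ℝ → ENNReal}
    {C : ENNReal} (hC : C ≠ ⊤) (hgh : ∀ x ∈ s, ENNReal.ofReal |f' x| * g (f x) ≤ C * h x)
    (hg : ∫⁻ y in f '' s, g y = ⊤) : ∫⁻ x in s, h x = ⊤ := by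
  have : ⊤ ≤ C * ∫⁻ x in s, h x :=
    calc ⊤ = ∫⁻ x in s, ENNReal.ofReal |f' x| * g (f x) := by
          rw [← lintegral_image_eq_lintegral_abs_deriv_mul hs hf' hf, hg]
      _ ≤ ∫⁻ x in s, C * h x := setLIntegral_mono' hs hgh
      _ = C * ∫⁻ x in s, h x := lintegral_const_mul' C h hC
  exact (ENNReal.mul_eq_top.1 (top_le_iff.1 this)).elim And.right (fun h' => absurd h'.1 hC)

theorem stmt_13_general (A Ainv : ℝ → ℝ)
    (hA : ContDiffOn ℝ 1 A (Set.Ici 0))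
    (hA' : ∀ s : ℝ, 0 < s → 0 < deriv A s)
    (K₀ : ℝ)
    (hAinvR : ∀ t : ℝ, 0 ≤ t → t < K₀ → 0 ≤ Ainv t ∧ A (Ainv t) = t)
    (n : ℕ) (hn : 2 ≤ n) (a : ℝ) (ha : 0 < a)
    (hdiv : ∫⁻ t in Set.Ioo (0:ℝ) K₀, ENNReal.ofReal (Ainv t / Real.sqrt (K₀ - t)) = ⊤) :
    ∫⁻ t in Set.Ioo (0:ℝ) 1,
      ENNReal.ofReal (Ainv (K₀ / Real.cosh (a * t) ^ (n - 1))) = ⊤ := by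
  have hK₀ : 0 < K₀ := by
    by_contra! h
    simp [Ioo_eq_empty_of_le h] at hdiv
  have hm : n - 1 ≠ 0 := by omega
  set K₁ := K₀ / cosh a ^ (n - 1)
  have himage := image_Ioo_div_cosh_pow hK₀ ha hm
  have hK₁ : 0 < K₁ := by positivity
  have hK₁K₀ : K₁ < K₀ := div_lt_self hK₀ (one_lt_pow₀ (one_lt_cosh.2 ha.ne') hm)
  have hAinv : MonotoneOn Ainv (Ico 0 K₀) := Function.monotoneOn_of_rightInvOn_of_mapsTo
    (strictMonoOn_of_deriv_pos (convex_Ici 0) hA.continuousOn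
      fun s hs => hA' s (by simpa using hs)).monotoneOn
    (fun t ht => (hAinvR t ht.1 ht.2).2) (fun t ht => (hAinvR t ht.1 ht.2).1)
  have htail := setLIntegral_Ioo_div_sqrt_eq_top hAinv hK₁.le hK₁K₀ (hAinvR _ hK₁.le hK₁K₀).1 hdiv
  rw [← himage] at htail
  refine setLIntegral_eq_top_of_image (C := ENNReal.ofReal √(2 * ↑(n - 1) ^ 2 * a ^ 2 * K₀))
    measurableSet_Ioo (fun u _ => (hasDerivAt_div_cosh_pow K₀ a (n - 1) u).hasDerivWithinAt)
    ((strictAntiOn_div_cosh_pow hK₀ ha hm).injOn.mono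
      (Ioo_subset_Ioi_self.trans Ioi_subset_Ici_self))
    ENNReal.ofReal_ne_top (fun u hu => ?_) htail
  have hφu := himage ▸ mem_image_of_mem _ hu
  rw [abs_neg]
  exact ofReal_abs_mul_ofReal_div_sqrt_le (hAinvR _ (hK₁.trans hφu.1).le hφu.2).1
    (sub_pos.2 hφu.2) (sq_deriv_div_cosh_pow_le K₀ a hm u)

/-- Let `n ≥ 2`, `a > 0`; assume 𝒜 is bounded and set
`K₀ := sup_{s ≥ 0} 𝒜(s)`. If `∫_0^{K₀} 𝒜⁻¹(t)/√(K₀ − t) dt = +∞`, then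
`∫_0^1 𝒜⁻¹( K₀·(cosh(a t))^{-(n-1)} ) dt = +∞` (as a Lebesgue integral of a nonnegative
function). -/
theorem stmt_13 (A Ainv : ℝ → ℝ)
    (hA : ContDiffOn ℝ 1 A (Set.Ici 0))
    (hA0 : A 0 = 0)
    (hA' : ∀ s : ℝ, 0 < s → 0 < deriv A s)
    (q δ₀ D : ℝ) (hq : 0 < q) (hδ₀ : 0 < δ₀) (hD : 0 < D)
    (hgrowth : ∀ s ∈ Set.Icc (0:ℝ) δ₀, D * s ^ q ≤ A s)
    (hbdd : BddAbove (A '' Set.Ici 0))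
    (K₀ : ℝ) (hK₀ : K₀ = sSup (A '' Set.Ici 0))
    (hAinvL : ∀ s : ℝ, 0 ≤ s → Ainv (A s) = s)
    (hAinvR : ∀ t : ℝ, 0 ≤ t → t < K₀ → 0 ≤ Ainv t ∧ A (Ainv t) = t)
    (n : ℕ) (hn : 2 ≤ n) (a : ℝ) (ha : 0 < a)
    (hdiv : ∫⁻ t in Set.Ioo (0:ℝ) K₀, ENNReal.ofReal (Ainv t / Real.sqrt (K₀ - t)) = ⊤) :
    ∫⁻ t in Set.Ioo (0:ℝ) 1,
      ENNReal.ofReal (Ainv (K₀ / Real.cosh (a * t) ^ (n - 1))) = ⊤ :=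
  stmt_13_general A Ainv hA hA' K₀ hAinvR n hn a ha hdiv
end

section
/- Assume moreover that 𝒜 is unbounded, so that its range is [0,∞) and 𝒜⁻¹ is defined on all of [0,∞), and let n ≥ 2 be an integer. Then g₀(d) = ∫_{-∞}^d 𝒜⁻¹( e^{(n-1)s} ) ds is finite for every d ∈ ℝ (the integral converges at −∞), g₀ is twice continuously differentiable with g₀'(d) = 𝒜⁻¹(e^{(n-1)d}) > 0, and g₀ satisfies the ordinary differential equation 𝒜'(g₀'(d))·g₀''(d) − (n-1)·𝒜(g₀'(d)) = 0 for every d ∈ ℝ. -/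
/-!
Since `𝒜` is strictly increasing with `𝒜(0) = 0`, its inverse is continuous and positive on
`(0, ∞)`, and the growth bound `𝒜(s) ≥ D̄ s^q` near `0` gives `𝒜⁻¹(t) ≤ (t / D̄)^{1/q}` for
small `t`. Hence the integrand `𝒜⁻¹(e^{(n-1)s})` is dominated by a multiple of `e^{(n-1)s/q}`
near `-∞`, so `g₀` is finite and, by the fundamental theorem of calculus,
`g₀' = 𝒜⁻¹(e^{(n-1)·})`. The inverse function theorem makes this `C¹` with
`𝒜'(g₀') g₀'' = (n-1) e^{(n-1)d} = (n-1) 𝒜(g₀')`.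
-/

open MeasureTheory Real Set Filter Topology

section RightInverse

variable {A Ainv : ℝ → ℝ}

theorem StrictMonoOn.leftInverse_of_rightInverse (hmono : StrictMonoOn A (Ici 0)) (hA0 : A 0 = 0)
    (hinv : ∀ t : ℝ, 0 ≤ t → 0 ≤ Ainv t ∧ A (Ainv t) = t) {s : ℝ} (hs : 0 ≤ s) :
    Ainv (A s) = s := by
  have hAs : 0 ≤ A s := hA0 ▸ hmono.monotoneOn self_mem_Ici hs hs
  exact hmono.injOn (hinv _ hAs).1 hs (hinv _ hAs).2

theorem pos_of_rightInverse (hA0 : A 0 = 0)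
    (hinv : ∀ t : ℝ, 0 ≤ t → 0 ≤ Ainv t ∧ A (Ainv t) = t) {t : ℝ} (ht : 0 < t) : 0 < Ainv t := by
  obtain ⟨hnonneg, hAt⟩ := hinv t ht.le
  refine hnonneg.lt_of_ne fun h => ?_
  rw [← h, hA0] at hAt
  exact ht.ne hAt

theorem StrictMonoOn.strictMonoOn_rightInverse (hmono : StrictMonoOn A (Ici 0))
    (hinv : ∀ t : ℝ, 0 ≤ t → 0 ≤ Ainv t ∧ A (Ainv t) = t) : StrictMonoOn Ainv (Ici 0) := by
  intro t₁ ht₁ t₂ ht₂ hlt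
  by_contra! hle
  have := hmono.monotoneOn (hinv t₂ ht₂).1 (hinv t₁ ht₁).1 hle
  rw [(hinv t₁ ht₁).2, (hinv t₂ ht₂).2] at this
  exact hlt.not_ge this

theorem StrictMonoOn.continuousAt_rightInverse (hmono : StrictMonoOn A (Ici 0)) (hA0 : A 0 = 0)
    (hinv : ∀ t : ℝ, 0 ≤ t → 0 ≤ Ainv t ∧ A (Ainv t) = t) {t : ℝ} (ht : 0 < t) :
    ContinuousAt Ainv t := by
  have hsurj : Ioi 0 ⊆ Ainv '' Ioi 0 := by
    intro u (hu : 0 < u)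
    exact ⟨A u, hA0 ▸ hmono self_mem_Ici hu.le hu, hmono.leftInverse_of_rightInverse hA0 hinv hu.le⟩
  have hmonoInv := (hmono.strictMonoOn_rightInverse hinv).mono Ioi_subset_Ici_self
  exact hmonoInv.continuousAt_of_image_mem_nhds (Ioi_mem_nhds ht)
    (mem_of_superset (Ioi_mem_nhds (pos_of_rightInverse hA0 hinv ht)) hsurj)

theorem StrictMonoOn.hasDerivAt_rightInverse (hmono : StrictMonoOn A (Ici 0)) (hA0 : A 0 = 0)
    (hinv : ∀ t : ℝ, 0 ≤ t → 0 ≤ Ainv t ∧ A (Ainv t) = t) {t : ℝ} (ht : 0 < t)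
    (hdiff : DifferentiableAt ℝ A (Ainv t)) (hne : deriv A (Ainv t) ≠ 0) :
    HasDerivAt Ainv (deriv A (Ainv t))⁻¹ t :=
  HasDerivAt.of_local_left_inverse (hmono.continuousAt_rightInverse hA0 hinv ht) hdiff.hasDerivAt
    hne (eventually_of_mem (Ioi_mem_nhds ht) fun y (hy : 0 < y) => (hinv y hy.le).2)

theorem StrictMonoOn.rightInverse_le_rpow (hmono : StrictMonoOn A (Ici 0))
    (hinv : ∀ t : ℝ, 0 ≤ t → 0 ≤ Ainv t ∧ A (Ainv t) = t) {q δ₀ D : ℝ} (hq : 0 < q)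
    (hδ₀ : 0 ≤ δ₀) (hD : 0 < D) (hgrowth : ∀ s ∈ Icc (0 : ℝ) δ₀, D * s ^ q ≤ A s) {t : ℝ}
    (ht : 0 ≤ t) (htδ₀ : t ≤ A δ₀) : Ainv t ≤ (D⁻¹ * t) ^ q⁻¹ := by
  obtain ⟨hu, hAu⟩ := hinv t ht
  have huδ₀ : Ainv t ≤ δ₀ := by
    by_contra! h
    have := hmono hδ₀ hu h
    rw [hAu] at this
    exact this.not_ge htδ₀
  have hpow : Ainv t ^ q ≤ D⁻¹ * t := by
    have := hgrowth _ ⟨hu, huδ₀⟩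
    rw [hAu] at this
    rwa [inv_mul_eq_div, le_div_iff₀' hD]
  calc Ainv t = (Ainv t ^ q) ^ q⁻¹ := by rw [← rpow_mul hu, mul_inv_cancel₀ hq.ne', rpow_one]
    _ ≤ (D⁻¹ * t) ^ q⁻¹ := rpow_le_rpow (rpow_nonneg hu q) hpow (inv_nonneg.2 hq.le)

theorem StrictMonoOn.continuous_rightInverse_comp (hmono : StrictMonoOn A (Ici 0)) (hA0 : A 0 = 0)
    (hinv : ∀ t : ℝ, 0 ≤ t → 0 ≤ Ainv t ∧ A (Ainv t) = t) {g : ℝ → ℝ} (hg : Continuous g)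
    (hg_pos : ∀ s, 0 < g s) : Continuous fun s => Ainv (g s) :=
  continuous_iff_continuousAt.2 fun s =>
    (hmono.continuousAt_rightInverse hA0 hinv (hg_pos s)).comp hg.continuousAt

theorem StrictMonoOn.integrableOn_rightInverse_comp_exp_Iic (hmono : StrictMonoOn A (Ici 0))
    (hA0 : A 0 = 0) (hinv : ∀ t : ℝ, 0 ≤ t → 0 ≤ Ainv t ∧ A (Ainv t) = t) {q δ₀ D : ℝ}
    (hq : 0 < q) (hδ₀ : 0 < δ₀) (hD : 0 < D) (hgrowth : ∀ s ∈ Icc (0 : ℝ) δ₀, D * s ^ q ≤ A s)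
    {c : ℝ} (hc : 0 < c) (d : ℝ) : IntegrableOn (fun s => Ainv (exp (c * s))) (Iic d) := by
  have hcont : Continuous fun s => Ainv (exp (c * s)) :=
    hmono.continuous_rightInverse_comp hA0 hinv (by fun_prop) fun s => exp_pos _
  have hAδ₀ : 0 < A δ₀ := hA0 ▸ hmono self_mem_Ici hδ₀.le hδ₀
  set a := log (A δ₀) / c
  -- below `a` the argument `e^{cs}` is at most `𝒜(δ₀)`, where the growth bound applies
  have htail : IntegrableOn (fun s => Ainv (exp (c * s))) (Iic a) := by
    refine ((integrableOn_exp_mul_Iic (mul_pos hc (inv_pos.2 hq)) a).const_mul (D⁻¹ ^ q⁻¹)).mono'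
      hcont.aestronglyMeasurable.restrict ?_
    filter_upwards [ae_restrict_mem measurableSet_Iic] with s (hs : s ≤ a)
    have hexp : exp (c * s) ≤ A δ₀ := by
      rw [← exp_log hAδ₀, exp_le_exp, mul_comm, ← le_div_iff₀ hc]
      exact hs
    rw [norm_of_nonneg (hinv _ (exp_pos _).le).1]
    calc Ainv (exp (c * s)) ≤ (D⁻¹ * exp (c * s)) ^ q⁻¹ :=
          hmono.rightInverse_le_rpow hinv hq hδ₀.le hD hgrowth (exp_pos _).le hexp
      _ = D⁻¹ ^ q⁻¹ * exp (c * q⁻¹ * s) := by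
          rw [mul_rpow (inv_nonneg.2 hD.le) (exp_pos _).le, ← exp_mul, mul_right_comm]
  exact (htail.union hcont.integrableOn_Icc).mono_set Iic_subset_Iic_union_Icc

end RightInverse

section Profile

variable {A Ainv : ℝ → ℝ} {c : ℝ}

theorem ContDiffOn.strictMonoOn_Ici_of_deriv_pos (hA : ContDiffOn ℝ 1 A (Ici 0))
    (hA' : ∀ s : ℝ, 0 < s → 0 < deriv A s) : StrictMonoOn A (Ici 0) :=
  strictMonoOn_of_deriv_pos (convex_Ici 0) hA.continuousOn fun x hx => hA' x (by simpa using hx)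

theorem hasDerivAt_rightInverse_comp_exp (hA : ContDiffOn ℝ 1 A (Ici 0)) (hA0 : A 0 = 0)
    (hA' : ∀ s : ℝ, 0 < s → 0 < deriv A s) (hinv : ∀ t : ℝ, 0 ≤ t → 0 ≤ Ainv t ∧ A (Ainv t) = t)
    (d : ℝ) :
    HasDerivAt (fun s => Ainv (exp (c * s)))
      ((deriv A (Ainv (exp (c * d))))⁻¹ * (c * exp (c * d))) d := by
  have hmono := hA.strictMonoOn_Ici_of_deriv_pos hA'
  have hpos := pos_of_rightInverse hA0 hinv (exp_pos (c * d))
  have hAinv := hmono.hasDerivAt_rightInverse hA0 hinv (exp_pos (c * d))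
    ((hA.contDiffAt (Ici_mem_nhds hpos)).differentiableAt one_ne_zero) (hA' _ hpos).ne'
  have hexp : HasDerivAt (fun s => exp (c * s)) (c * exp (c * d)) d := by
    simpa [mul_comm] using ((hasDerivAt_id d).const_mul c).exp
  exact hAinv.comp d hexp

theorem contDiff_one_rightInverse_comp_exp (hA : ContDiffOn ℝ 1 A (Ici 0)) (hA0 : A 0 = 0)
    (hA' : ∀ s : ℝ, 0 < s → 0 < deriv A s) (hinv : ∀ t : ℝ, 0 ≤ t → 0 ≤ Ainv t ∧ A (Ainv t) = t) :
    ContDiff ℝ 1 fun s => Ainv (exp (c * s)) := by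
  have hderiv := hasDerivAt_rightInverse_comp_exp (c := c) hA hA0 hA' hinv
  have hpos : ∀ s, 0 < Ainv (exp (c * s)) := fun s => pos_of_rightInverse hA0 hinv (exp_pos _)
  have hcont : Continuous fun s => Ainv (exp (c * s)) :=
    (hA.strictMonoOn_Ici_of_deriv_pos hA').continuous_rightInverse_comp hA0 hinv (by fun_prop)
      fun s => exp_pos _
  have hcont_derivA : Continuous fun s => deriv A (Ainv (exp (c * s))) :=
    ((hA.mono Ioi_subset_Ici_self).continuousOn_deriv_of_isOpen isOpen_Ioi le_rfl).comp_continuous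
      hcont hpos
  rw [contDiff_one_iff_deriv, funext fun d => (hderiv d).deriv]
  exact ⟨fun d => (hderiv d).differentiableAt,
    (hcont_derivA.inv₀ fun s => (hA' _ (hpos s)).ne').mul (by fun_prop)⟩

end Profile

theorem hasDerivAt_integral_Iic {E : Type*} [NormedAddCommGroup E] [NormedSpace ℝ E]
    [CompleteSpace E] {f : ℝ → E} (hf : Continuous f) (hint : ∀ d, IntegrableOn f (Iic d))
    (x : ℝ) : HasDerivAt (fun d => ∫ s in Iic d, f s) (f x) x := by
  have hsplit : (fun d => ∫ s in Iic d, f s) =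
      fun d => (∫ s in Iic 0, f s) + ∫ s in (0 : ℝ)..d, f s := by
    funext d
    rw [← intervalIntegral.integral_Iic_sub_Iic (hint 0) (hint d), add_sub_cancel]
  rw [hsplit]
  exact (intervalIntegral.integral_hasDerivAt_right (hf.intervalIntegrable 0 x)
    hf.stronglyMeasurable.stronglyMeasurableAtFilter hf.continuousAt).const_add _

theorem stmt_14_general (A Ainv : ℝ → ℝ)
    (hA : ContDiffOn ℝ 1 A (Set.Ici 0))
    (hA0 : A 0 = 0)
    (hA' : ∀ s : ℝ, 0 < s → 0 < deriv A s)
    (q δ₀ D : ℝ) (hq : 0 < q) (hδ₀ : 0 < δ₀) (hD : 0 < D)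
    (hgrowth : ∀ s ∈ Set.Icc (0:ℝ) δ₀, D * s ^ q ≤ A s)
    (hAinvR : ∀ t : ℝ, 0 ≤ t → 0 ≤ Ainv t ∧ A (Ainv t) = t)
    (n : ℕ) (hn : 2 ≤ n)
    (g₀ : ℝ → ℝ)
    (hg₀ : ∀ d : ℝ, g₀ d = ∫ s in Set.Iic d, Ainv (Real.exp (((n : ℝ) - 1) * s))) :
    (∀ d : ℝ,
      MeasureTheory.IntegrableOn (fun s => Ainv (Real.exp (((n : ℝ) - 1) * s))) (Set.Iic d)) ∧
    ContDiff ℝ 2 g₀ ∧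
    (∀ d : ℝ, deriv g₀ d = Ainv (Real.exp (((n : ℝ) - 1) * d)) ∧ 0 < deriv g₀ d) ∧
    (∀ d : ℝ,
      deriv A (deriv g₀ d) * deriv (deriv g₀) d - ((n : ℝ) - 1) * A (deriv g₀ d) = 0) := by
  set c : ℝ := (n : ℝ) - 1
  have hc : 0 < c := by
    have : (2 : ℝ) ≤ n := by exact_mod_cast hn
    linarith
  have hmono := hA.strictMonoOn_Ici_of_deriv_pos hA'
  have hint := hmono.integrableOn_rightInverse_comp_exp_Iic hA0 hAinvR hq hδ₀ hD hgrowth hc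
  have hg₀_deriv : ∀ d, HasDerivAt g₀ (Ainv (exp (c * d))) d := by
    rw [funext hg₀]
    exact hasDerivAt_integral_Iic
      (hmono.continuous_rightInverse_comp hA0 hAinvR (by fun_prop) fun s => exp_pos _) hint
  have hderiv : deriv g₀ = fun d => Ainv (exp (c * d)) := funext fun d => (hg₀_deriv d).deriv
  have hpos : ∀ d, 0 < Ainv (exp (c * d)) := fun d => pos_of_rightInverse hA0 hAinvR (exp_pos _)
  refine ⟨hint, ?_, fun d => ⟨by rw [hderiv], hderiv ▸ hpos d⟩, fun d => ?_⟩
  · rw [show (2 : WithTop ℕ∞) = 1 + 1 by norm_num, contDiff_succ_iff_deriv, hderiv]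
    exact ⟨fun d => (hg₀_deriv d).differentiableAt, by simp,
      contDiff_one_rightInverse_comp_exp hA hA0 hA' hAinvR⟩
  · rw [hderiv, (hasDerivAt_rightInverse_comp_exp hA hA0 hA' hAinvR d).deriv,
      (hAinvR _ (exp_pos _).le).2, mul_inv_cancel_left₀ (hA' _ (hpos d)).ne', sub_self]

/-- Assume 𝒜 is unbounded, so that its range is `[0,∞)` and 𝒜⁻¹ is defined on
all of `[0,∞)`, and let `n ≥ 2`. Then `g₀(d) = ∫_{-∞}^d 𝒜⁻¹( e^{(n-1)s} ) ds` is finite for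
every `d ∈ ℝ` (the integral converges at −∞), `g₀` is twice continuously differentiable with
`g₀'(d) = 𝒜⁻¹(e^{(n-1)d}) > 0`, and `𝒜'(g₀'(d))·g₀''(d) − (n-1)·𝒜(g₀'(d)) = 0` for every
`d ∈ ℝ`. -/
theorem stmt_14 (A Ainv : ℝ → ℝ)
    (hA : ContDiffOn ℝ 1 A (Set.Ici 0))
    (hA0 : A 0 = 0)
    (hA' : ∀ s : ℝ, 0 < s → 0 < deriv A s)
    (q δ₀ D : ℝ) (hq : 0 < q) (hδ₀ : 0 < δ₀) (hD : 0 < D)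
    (hgrowth : ∀ s ∈ Set.Icc (0:ℝ) δ₀, D * s ^ q ≤ A s)
    (hunbdd : ¬ BddAbove (A '' Set.Ici 0))
    (hAinvL : ∀ s : ℝ, 0 ≤ s → Ainv (A s) = s)
    (hAinvR : ∀ t : ℝ, 0 ≤ t → 0 ≤ Ainv t ∧ A (Ainv t) = t)
    (n : ℕ) (hn : 2 ≤ n)
    (g₀ : ℝ → ℝ)
    (hg₀ : ∀ d : ℝ, g₀ d = ∫ s in Set.Iic d, Ainv (Real.exp (((n : ℝ) - 1) * s))) :
    (∀ d : ℝ,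
      MeasureTheory.IntegrableOn (fun s => Ainv (Real.exp (((n : ℝ) - 1) * s))) (Set.Iic d)) ∧
    ContDiff ℝ 2 g₀ ∧
    (∀ d : ℝ, deriv g₀ d = Ainv (Real.exp (((n : ℝ) - 1) * d)) ∧ 0 < deriv g₀ d) ∧
    (∀ d : ℝ,
      deriv A (deriv g₀ d) * deriv (deriv g₀) d - ((n : ℝ) - 1) * A (deriv g₀ d) = 0) :=
  stmt_14_general A Ainv hA hA0 hA' q δ₀ D hq hδ₀ hD hgrowth hAinvR n hn g₀ hg₀
end
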